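/- arXiv:math/0306025 — 6 statements merged into one kernel-verified Lean document; each statement's English description precedes it below -/
import Mathlib

section
/- Let A and V be bounded self-adjoint operators on a Hilbert space H, B = A + V, and P an orthogonal projection commuting with A such that P V P = 0 and (I−P) V (I−P) = 0. Let A₀ and A₁ be the parts (restrictions) of A to its invariant subspaces Ran P and Ran(I−P), respectively. Then inf spec(A) − δ_V^ℓ ≤ inf spec(B) ≤ inf spec(A) and sup spec(A) ≤ sup spec(B) ≤ sup spec(A) + δ_V^r, where δ_V^ℓ = ‖V‖·tan((1/2)·arctan(2‖V‖/|inf spec(A₁) − inf spec(A₀)|)) and δ_V^r = ‖V‖·tan((1/2)·arctan(2‖V‖/|sup spec(A₁) − sup spec(A₀)|)), with the convention arctan(+∞) = π/2 (so δ = ‖V‖·tan(π/4) = ‖V‖) when the corresponding denominator vanishes. -/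
/-!
Write `x = p + q` with `p = P x` and `q = (1 - P) x`. Since `A` commutes with `P` and `V` is
off-diagonal, `re ⟪(A + V) x, x⟫ = re ⟪A p, p⟫ + re ⟪A q, q⟫ + 2 re ⟪V p, q⟫`, which is at least
`m₀ ‖p‖² + m₁ ‖q‖² - 2 ‖V‖ ‖p‖ ‖q‖`, where `m₀`, `m₁` are the bottoms of the spectra of the parts
`A₀`, `A₁`. The smallest eigenvalue of `[[m₀, -‖V‖], [-‖V‖, m₁]]` is `min m₀ m₁ - δ` with
`δ = √((|m₁ - m₀| / 2)² + ‖V‖²) - |m₁ - m₀| / 2`, and the half-angle formula turns this `δ` into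
`‖V‖ tan (½ arctan (2 ‖V‖ / |m₁ - m₀|))`. Conversely `A + V` has the same quadratic form as `A` on
`Ran P` and on `Ran (1 - P)`, so variationally `inf spec (A + V) ≤ min m₀ m₁ = inf spec A`.
The bounds at the top of the spectrum follow by applying this to `-A` and `-V`.
-/

open ContinuousLinearMap RCLike
open scoped InnerProductSpace

section Shift

open Real

theorem Real.tan_arctan_div_two (t : ℝ) : tan (arctan t / 2) = t / (1 + √(1 + t ^ 2)) := by
  have hcos_pos : 0 < cos (arctan t / 2) := cos_pos_of_mem_Ioo
    ⟨by linarith [neg_pi_div_two_lt_arctan t, pi_pos], by linarith [arctan_lt_pi_div_two t, pi_pos]⟩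
  have hR : 0 < √(1 + t ^ 2) := by positivity
  have hdouble : arctan t = 2 * (arctan t / 2) := by ring
  have hsin : 2 * sin (arctan t / 2) * cos (arctan t / 2) * √(1 + t ^ 2) = t := by
    rw [← sin_two_mul, ← hdouble, sin_arctan, div_mul_cancel₀ _ hR.ne']
  have hcos : (2 * cos (arctan t / 2) ^ 2 - 1) * √(1 + t ^ 2) = 1 := by
    rw [← cos_two_mul, ← hdouble, cos_arctan, one_div_mul_cancel hR.ne']
  rw [tan_eq_sin_div_cos, div_eq_div_iff hcos_pos.ne' (by positivity)]
  linear_combination (-sin (arctan t / 2)) * hcos + cos (arctan t / 2) * hsin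

noncomputable def offDiagonalShift (v g : ℝ) : ℝ := √((g / 2) ^ 2 + v ^ 2) - g / 2

theorem offDiagonalShift_nonneg (v g : ℝ) : 0 ≤ offDiagonalShift v g := by
  have : g / 2 ≤ √((g / 2) ^ 2 + v ^ 2) := le_sqrt_of_sq_le (le_add_of_nonneg_right (sq_nonneg v))
  rw [offDiagonalShift]
  linarith

theorem offDiagonalShift_mul_add_self (v g : ℝ) :
    offDiagonalShift v g * (offDiagonalShift v g + g) = v ^ 2 := by
  unfold offDiagonalShift
  linear_combination sq_sqrt (by positivity : 0 ≤ (g / 2) ^ 2 + v ^ 2)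

theorem offDiagonalShift_zero_left {g : ℝ} (hg : 0 ≤ g) : offDiagonalShift 0 g = 0 := by
  simp [offDiagonalShift, sqrt_sq (by positivity : 0 ≤ g / 2)]

theorem mul_tan_arctan_div_two {v g : ℝ} (hg : 0 < g) :
    v * tan (arctan (2 * v / g) / 2) = offDiagonalShift v g := by
  have h := offDiagonalShift_mul_add_self v g
  have hδ := offDiagonalShift_nonneg v g
  generalize offDiagonalShift v g = δ at h hδ ⊢
  have hsqrt : √(1 + (2 * v / g) ^ 2) = (2 * δ + g) / g := by
    rw [sqrt_eq_iff_mul_self_eq_of_pos (by positivity)]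
    field_simp
    linear_combination 4 * h
  rw [tan_arctan_div_two, hsqrt]
  field_simp
  linear_combination -2 * h

theorem offDiagonalShift_abs_sub_eq_ite {v : ℝ} (hv : 0 ≤ v) (a b : ℝ) :
    offDiagonalShift v |b - a| =
      if b = a then v else v * tan (arctan (2 * v / |b - a|) / 2) := by
  split_ifs with h
  · simp [h, offDiagonalShift, sqrt_sq hv]
  · exact (mul_tan_arctan_div_two (abs_pos.2 (sub_ne_zero.2 h))).symm

theorem two_mul_mul_mul_le_offDiagonalShift {g : ℝ} (hg : 0 ≤ g) (v t s : ℝ) :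
    2 * v * t * s ≤ offDiagonalShift v g * t ^ 2 + (offDiagonalShift v g + g) * s ^ 2 := by
  have h := offDiagonalShift_mul_add_self v g
  have hδ := offDiagonalShift_nonneg v g
  generalize offDiagonalShift v g = δ at h hδ ⊢
  rcases hδ.eq_or_lt with rfl | hδ
  · obtain rfl : v = 0 := pow_eq_zero_iff two_ne_zero |>.1 (by linarith)
    nlinarith [mul_nonneg hg (sq_nonneg s)]
  · refine le_of_mul_le_mul_left ?_ hδ
    nlinarith [sq_nonneg (δ * t - v * s)]

theorem min_sub_offDiagonalShift_mul_le (m₀ m₁ v t s : ℝ) :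
    (min m₀ m₁ - offDiagonalShift v |m₁ - m₀|) * (t ^ 2 + s ^ 2) ≤
      m₀ * t ^ 2 + m₁ * s ^ 2 - 2 * v * t * s := by
  rcases le_total m₀ m₁ with h | h
  · have := two_mul_mul_mul_le_offDiagonalShift (sub_nonneg.2 h) v t s
    rw [min_eq_left h, abs_of_nonneg (sub_nonneg.2 h)]
    linarith
  · have := two_mul_mul_mul_le_offDiagonalShift (sub_nonneg.2 h) v s t
    rw [min_eq_right h, abs_sub_comm, abs_of_nonneg (sub_nonneg.2 h)]
    linarith

end Shift

theorem sInf_spectrum_neg {A : Type*} [Ring A] [Algebra ℝ A] (a : A) :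
    sInf (spectrum ℝ (-a)) = -sSup (spectrum ℝ a) := by
  rw [← spectrum.neg_eq, Real.sInf_def, neg_neg]

section Operators

variable {H : Type*} [NormedAddCommGroup H] [InnerProductSpace ℂ H] [CompleteSpace H]

theorem le_sInf_spectrum_iff [Nontrivial H] {T : H →L[ℂ] H} (hT : IsSelfAdjoint T) (c : ℝ) :
    c ≤ sInf (spectrum ℝ T) ↔ ∀ x : H, c * ‖x‖ ^ 2 ≤ re ⟪T x, x⟫_ℂ := by
  rw [le_csInf_iff (spectrum.isBounded T).bddBelow
      (ContinuousFunctionalCalculus.spectrum_nonempty T hT),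
    ← algebraMap_le_iff_le_spectrum hT, le_def, IsPositive,
    and_iff_right (hT.sub (.algebraMap _ (.all c))).isSymmetric]
  simp [reApplyInnerSelf_apply, Algebra.algebraMap_eq_smul_one, inner_sub_left,
    ← Complex.coe_smul, inner_smul_left, inner_self_eq_norm_sq_to_K, ← Complex.ofReal_pow]

section Submodule

variable {K : Submodule ℂ H} [CompleteSpace K] {T : H →L[ℂ] H} {S : K →L[ℂ] K}

theorem isSelfAdjoint_of_forall_coe_apply_eq (hT : IsSelfAdjoint T)
    (hS : ∀ x, (S x : H) = T x) : IsSelfAdjoint S := by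
  rw [isSelfAdjoint_iff_isSymmetric]
  intro x y
  simp only [coe_coe, Submodule.coe_inner, hS]
  exact hT.isSymmetric _ _

theorem sInf_spectrum_mul_norm_sq_le [Nontrivial K] (hT : IsSelfAdjoint T)
    (hS : ∀ x, (S x : H) = T x) (x : K) :
    sInf (spectrum ℝ S) * ‖(x : H)‖ ^ 2 ≤ re ⟪T x, x⟫_ℂ := by
  simpa [Submodule.coe_inner, hS] using
    (le_sInf_spectrum_iff (isSelfAdjoint_of_forall_coe_apply_eq hT hS) _).1 le_rfl x

theorem sInf_spectrum_le_of_forall_re_inner_le [Nontrivial K] (hT : IsSelfAdjoint T)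
    (hS : IsSelfAdjoint S) (h : ∀ x : K, re ⟪T x, x⟫_ℂ ≤ re ⟪S x, x⟫_ℂ) :
    sInf (spectrum ℝ T) ≤ sInf (spectrum ℝ S) := by
  have : Nontrivial H := (Subtype.val_injective (p := (· ∈ K))).nontrivial
  exact (le_sInf_spectrum_iff hS _).2 fun x => ((le_sInf_spectrum_iff hT _).1 le_rfl x).trans (h x)

end Submodule

theorem IsSelfAdjoint.inner_mul_mul_apply_self {P : H →L[ℂ] H} (hP : IsSelfAdjoint P)
    (T Q : H →L[ℂ] H) (x : H) : ⟪(P * T * Q) x, x⟫_ℂ = ⟪T (Q x), P x⟫_ℂ :=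
  hP.isSymmetric _ _

namespace IsStarProjection

variable {P : H →L[ℂ] H}

theorem norm_sq_eq_add_norm_sq (hP : IsStarProjection P) (x : H) :
    ‖x‖ ^ 2 = ‖P x‖ ^ 2 + ‖(1 - P) x‖ ^ 2 := by
  have horth : ⟪P x, (1 - P) x⟫_ℂ = 0 := by
    rw [show ⟪P x, (1 - P) x⟫_ℂ = ⟪x, (P * (1 - P)) x⟫_ℂ from hP.isSelfAdjoint.isSymmetric _ _,
      hP.isIdempotentElem.mul_one_sub_self, zero_apply, inner_zero_right]
  calc ‖x‖ ^ 2 = ‖P x + (1 - P) x‖ ^ 2 := by simp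
  _ = _ := by rw [norm_add_sq (𝕜 := ℂ), horth, map_zero, mul_zero, add_zero]

theorem inner_apply_self_of_commute (hP : IsStarProjection P) {A : H →L[ℂ] H}
    (hAP : Commute A P) (x : H) :
    ⟪A x, x⟫_ℂ = ⟪A (P x), P x⟫_ℂ + ⟪A ((1 - P) x), (1 - P) x⟫_ℂ := by
  have hA : A = P * A * P + (1 - P) * A * (1 - P) := by
    rw [← hAP.eq, mul_assoc, hP.isIdempotentElem.eq, ← ((Commute.one_right A).sub_right hAP).eq,
      mul_assoc, hP.one_sub.isIdempotentElem.eq]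
    noncomm_ring
  conv_lhs => rw [hA]
  rw [add_apply, inner_add_left, hP.isSelfAdjoint.inner_mul_mul_apply_self,
    hP.one_sub.isSelfAdjoint.inner_mul_mul_apply_self]

theorem re_inner_apply_self_of_offDiagonal (hP : IsStarProjection P) {V : H →L[ℂ] H}
    (hV : IsSelfAdjoint V) (h₁ : P * V * P = 0) (h₂ : (1 - P) * V * (1 - P) = 0) (x : H) :
    re ⟪V x, x⟫_ℂ = 2 * re ⟪V (P x), (1 - P) x⟫_ℂ := by
  have hV' : V = P * V * (1 - P) + (1 - P) * V * P :=
    calc V = P * V * P + P * V * (1 - P) + (1 - P) * V * P + (1 - P) * V * (1 - P) := by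
          noncomm_ring
    _ = _ := by rw [h₁, h₂, zero_add, add_zero]
  have hconj : ⟪V ((1 - P) x), P x⟫_ℂ = starRingEnd ℂ ⟪V (P x), (1 - P) x⟫_ℂ := by
    rw [inner_conj_symm]
    exact hV.isSymmetric _ _
  conv_lhs => rw [hV']
  rw [add_apply, inner_add_left, hP.isSelfAdjoint.inner_mul_mul_apply_self,
    hP.one_sub.isSelfAdjoint.inner_mul_mul_apply_self, hconj, map_add, conj_re]
  ring

theorem min_sub_offDiagonalShift_mul_norm_sq_le (hP : IsStarProjection P) {A V : H →L[ℂ] H}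
    (hAP : Commute A P) (hV : IsSelfAdjoint V) (h₁ : P * V * P = 0)
    (h₂ : (1 - P) * V * (1 - P) = 0) {m₀ m₁ : ℝ}
    (hm₀ : ∀ x, m₀ * ‖P x‖ ^ 2 ≤ re ⟪A (P x), P x⟫_ℂ)
    (hm₁ : ∀ x, m₁ * ‖(1 - P) x‖ ^ 2 ≤ re ⟪A ((1 - P) x), (1 - P) x⟫_ℂ) (x : H) :
    (min m₀ m₁ - offDiagonalShift ‖V‖ |m₁ - m₀|) * ‖x‖ ^ 2 ≤ re ⟪(A + V) x, x⟫_ℂ := by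
  have hcross : -(‖V‖ * ‖P x‖ * ‖(1 - P) x‖) ≤ re ⟪V (P x), (1 - P) x⟫_ℂ :=
    neg_le_of_abs_le <| (abs_re_le_norm _).trans <| (norm_inner_le_norm _ _).trans <|
      mul_le_mul_of_nonneg_right (le_opNorm _ _) (norm_nonneg _)
  rw [add_apply, inner_add_left, map_add, hP.inner_apply_self_of_commute hAP, map_add,
    hP.re_inner_apply_self_of_offDiagonal hV h₁ h₂, hP.norm_sq_eq_add_norm_sq x]
  linarith [min_sub_offDiagonalShift_mul_le m₀ m₁ ‖V‖ ‖P x‖ ‖(1 - P) x‖, hm₀ x, hm₁ x]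

end IsStarProjection

theorem sInf_spectrum_add_le_sInf_spectrum_restrict {A V P : H →L[ℂ] H} (hA : IsSelfAdjoint A)
    (hV : IsSelfAdjoint V) (hP : IsSelfAdjoint P) (hoff : P * V * P = 0)
    [Nontrivial (LinearMap.range (P : H →ₗ[ℂ] H))]
    [CompleteSpace (LinearMap.range (P : H →ₗ[ℂ] H))]
    {A₀ : LinearMap.range (P : H →ₗ[ℂ] H) →L[ℂ] LinearMap.range (P : H →ₗ[ℂ] H)}
    (hA₀ : ∀ x, (A₀ x : H) = A x) :
    sInf (spectrum ℝ (A + V)) ≤ sInf (spectrum ℝ A₀) := by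
  refine sInf_spectrum_le_of_forall_re_inner_le (hA.add hV)
    (isSelfAdjoint_of_forall_coe_apply_eq hA hA₀) fun ⟨_, z, rfl⟩ => ?_
  simp [Submodule.coe_inner, hA₀, ← hP.inner_mul_mul_apply_self, hoff]

theorem sInf_spectrum_add_offDiagonal {A V P : H →L[ℂ] H} (hA : IsSelfAdjoint A)
    (hV : IsSelfAdjoint V) (hP : IsStarProjection P) (hAP : Commute A P)
    (h₁ : P * V * P = 0) (h₂ : (1 - P) * V * (1 - P) = 0)
    {A₀ : LinearMap.range (P : H →ₗ[ℂ] H) →L[ℂ] LinearMap.range (P : H →ₗ[ℂ] H)}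
    (hA₀ : ∀ x, (A₀ x : H) = A x)
    {A₁ : LinearMap.range ((1 - P : H →L[ℂ] H) : H →ₗ[ℂ] H) →L[ℂ]
      LinearMap.range ((1 - P : H →L[ℂ] H) : H →ₗ[ℂ] H)}
    (hA₁ : ∀ x, (A₁ x : H) = A x) :
    sInf (spectrum ℝ A) - offDiagonalShift ‖V‖ |sInf (spectrum ℝ A₁) - sInf (spectrum ℝ A₀)| ≤
        sInf (spectrum ℝ (A + V)) ∧
      sInf (spectrum ℝ (A + V)) ≤ sInf (spectrum ℝ A) := by
  -- For `V ≠ 0` both ranges are nontrivial, so the junk value `sInf ∅ = 0` never enters.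
  obtain rfl | hV0 := eq_or_ne V 0
  · simp [offDiagonalShift_nonneg]
  have : Nontrivial (LinearMap.range (P : H →ₗ[ℂ] H)) := by
    rw [Submodule.nontrivial_iff_ne_bot, Ne, LinearMap.range_eq_bot, ← toLinearMap_zero, coe_inj]
    rintro rfl
    exact hV0 (by simpa using h₂)
  have : Nontrivial (LinearMap.range ((1 - P : H →L[ℂ] H) : H →ₗ[ℂ] H)) := by
    rw [Submodule.nontrivial_iff_ne_bot, Ne, LinearMap.range_eq_bot, ← toLinearMap_zero, coe_inj,
      sub_eq_zero]
    rintro rfl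
    exact hV0 (by simpa using h₁)
  have : Nontrivial H :=
    (Subtype.val_injective (p := (· ∈ LinearMap.range (P : H →ₗ[ℂ] H)))).nontrivial
  have := hP.isIdempotentElem.isClosed_range.completeSpace_coe
  have := hP.one_sub.isIdempotentElem.isClosed_range.completeSpace_coe
  have hlower := fun {W} (hW : IsSelfAdjoint W) hW₁ hW₂ =>
    hP.min_sub_offDiagonalShift_mul_norm_sq_le hAP hW hW₁ hW₂
      (fun x => sInf_spectrum_mul_norm_sq_le hA hA₀ ⟨P x, LinearMap.mem_range_self _ x⟩)
      (fun x => sInf_spectrum_mul_norm_sq_le hA hA₁ ⟨(1 - P) x, LinearMap.mem_range_self _ x⟩)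
  have hA_eq : sInf (spectrum ℝ A) = min (sInf (spectrum ℝ A₀)) (sInf (spectrum ℝ A₁)) := by
    refine le_antisymm (le_min ?_ ?_) ((le_sInf_spectrum_iff hA _).2 fun x => ?_)
    · simpa using sInf_spectrum_add_le_sInf_spectrum_restrict hA (.zero _) hP.isSelfAdjoint
        (by simp) hA₀
    · simpa using sInf_spectrum_add_le_sInf_spectrum_restrict hA (.zero _)
        hP.one_sub.isSelfAdjoint (by simp) hA₁
    · simpa [offDiagonalShift_zero_left (abs_nonneg _)] using
        hlower (.zero _) (by simp) (by simp) x
  have hB_le := le_min (sInf_spectrum_add_le_sInf_spectrum_restrict hA hV hP.isSelfAdjoint h₁ hA₀)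
    (sInf_spectrum_add_le_sInf_spectrum_restrict hA hV hP.one_sub.isSelfAdjoint h₂ hA₁)
  have hB_ge := (le_sInf_spectrum_iff (hA.add hV) _).2 (hlower hV h₁ h₂)
  constructor <;> linarith

theorem sSup_spectrum_add_offDiagonal {A V P : H →L[ℂ] H} (hA : IsSelfAdjoint A)
    (hV : IsSelfAdjoint V) (hP : IsStarProjection P) (hAP : Commute A P)
    (h₁ : P * V * P = 0) (h₂ : (1 - P) * V * (1 - P) = 0)
    {A₀ : LinearMap.range (P : H →ₗ[ℂ] H) →L[ℂ] LinearMap.range (P : H →ₗ[ℂ] H)}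
    (hA₀ : ∀ x, (A₀ x : H) = A x)
    {A₁ : LinearMap.range ((1 - P : H →L[ℂ] H) : H →ₗ[ℂ] H) →L[ℂ]
      LinearMap.range ((1 - P : H →L[ℂ] H) : H →ₗ[ℂ] H)}
    (hA₁ : ∀ x, (A₁ x : H) = A x) :
    sSup (spectrum ℝ A) ≤ sSup (spectrum ℝ (A + V)) ∧
      sSup (spectrum ℝ (A + V)) ≤
        sSup (spectrum ℝ A) +
          offDiagonalShift ‖V‖ |sSup (spectrum ℝ A₁) - sSup (spectrum ℝ A₀)| := by
  have h := sInf_spectrum_add_offDiagonal hA.neg hV.neg hP hAP.neg_left (by simp [h₁])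
    (by simp [h₂]) (A₀ := -A₀) (fun x => by rw [neg_apply, Submodule.coe_neg, hA₀, neg_apply])
    (A₁ := -A₁) (fun x => by rw [neg_apply, Submodule.coe_neg, hA₁, neg_apply])
  rw [← neg_add, sInf_spectrum_neg, sInf_spectrum_neg, sInf_spectrum_neg, sInf_spectrum_neg,
    norm_neg, neg_sub_neg, abs_sub_comm] at h
  constructor <;> linarith [h.1, h.2]

end Operators

/-- **Lemma 1.1.** Let `A` and `V` be bounded self-adjoint operators on a Hilbert space `H`,
`B = A + V`, and `P` an orthogonal projection commuting with `A` such that `V` is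
off-diagonal with respect to `H = Ran P ⊕ Ran (1 − P)`. If `A₀` and `A₁` denote the parts of
`A` in the invariant subspaces `Ran P` and `Ran (1 − P)` respectively, then
`inf A − δ_V^ℓ ≤ inf B ≤ inf A` and `sup A ≤ sup B ≤ sup A + δ_V^r`, where
`δ_V^ℓ = ‖V‖ tan((1/2) arctan(2‖V‖/|inf A₁ − inf A₀|))` and
`δ_V^r = ‖V‖ tan((1/2) arctan(2‖V‖/|sup A₁ − sup A₀|))`, with the convention
`arctan (+∞) = π/2` (so that `δ = ‖V‖`) when the corresponding denominator vanishes. -/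
theorem inf_sup_spectrum_bounds_offdiagonal
    {H : Type*} [NormedAddCommGroup H] [InnerProductSpace ℂ H] [CompleteSpace H]
    (A V B P : H →L[ℂ] H) (hA : IsSelfAdjoint A) (hV : IsSelfAdjoint V) (hB : B = A + V)
    (hP : IsSelfAdjoint P) (hP2 : P * P = P) (hAP : Commute A P)
    (hoff₁ : P * V * P = 0) (hoff₂ : (1 - P) * V * (1 - P) = 0)
    (A₀ : ↥(LinearMap.range (P : H →ₗ[ℂ] H)) →L[ℂ] ↥(LinearMap.range (P : H →ₗ[ℂ] H)))
    (hA₀ : ∀ x : ↥(LinearMap.range (P : H →ₗ[ℂ] H)), (A₀ x : H) = A x)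
    (A₁ : ↥(LinearMap.range ((1 - P : H →L[ℂ] H) : H →ₗ[ℂ] H)) →L[ℂ] ↥(LinearMap.range ((1 - P : H →L[ℂ] H) : H →ₗ[ℂ] H)))
    (hA₁ : ∀ x : ↥(LinearMap.range ((1 - P : H →L[ℂ] H) : H →ₗ[ℂ] H)), (A₁ x : H) = A x)
    (δℓ δr : ℝ)
    (hδℓ : δℓ = if sInf (spectrum ℝ A₁) = sInf (spectrum ℝ A₀) then ‖V‖
      else ‖V‖ * Real.tan (Real.arctan
        (2 * ‖V‖ / |sInf (spectrum ℝ A₁) - sInf (spectrum ℝ A₀)|) / 2))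
    (hδr : δr = if sSup (spectrum ℝ A₁) = sSup (spectrum ℝ A₀) then ‖V‖
      else ‖V‖ * Real.tan (Real.arctan
        (2 * ‖V‖ / |sSup (spectrum ℝ A₁) - sSup (spectrum ℝ A₀)|) / 2)) :
    (sInf (spectrum ℝ A) - δℓ ≤ sInf (spectrum ℝ B) ∧
      sInf (spectrum ℝ B) ≤ sInf (spectrum ℝ A)) ∧
    (sSup (spectrum ℝ A) ≤ sSup (spectrum ℝ B) ∧
      sSup (spectrum ℝ B) ≤ sSup (spectrum ℝ A) + δr) := by
  have hPproj : IsStarProjection P := ⟨hP2, hP⟩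
  rw [← offDiagonalShift_abs_sub_eq_ite (norm_nonneg V)] at hδℓ hδr
  subst hB hδℓ hδr
  exact ⟨sInf_spectrum_add_offDiagonal hA hV hPproj hAP hoff₁ hoff₂ hA₀ hA₁,
    sSup_spectrum_add_offDiagonal hA hV hPproj hAP hoff₁ hoff₂ hA₀ hA₁⟩
end

section
/- Let A and B be bounded self-adjoint operators on a Hilbert space and let σ and Δ be Borel subsets of ℝ such that the convex hull of σ does not intersect Δ, or the convex hull of Δ does not intersect σ. Then dist(σ, Δ)·‖E_A(σ)·E_B(Δ)‖ ≤ ‖A − B‖. -/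
/-- `E` is the projection-valued spectral measure of the bounded self-adjoint operator `T`
on the complex Hilbert space `H`: each `E Δ` (for Borel `Δ ⊆ ℝ`) is an orthogonal
projection, `E` is multiplicative and countably additive (in the strong sense), `E ℝ = 1`,
each `E Δ` commutes with `T`, and on the range of `E Δ` the operator `T` has its
approximate point spectrum inside the closure of `Δ` (which uniquely characterizes the
spectral measure of `T`). -/
structure IsSpectralMeasure {H : Type*} [NormedAddCommGroup H] [InnerProductSpace ℂ H]
    [CompleteSpace H] (T : H →L[ℂ] H) (E : Set ℝ → H →L[ℂ] H) : Prop where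
  isSelfAdjoint : ∀ Δ : Set ℝ, MeasurableSet Δ → IsSelfAdjoint (E Δ)
  map_inter : ∀ Δ₁ Δ₂ : Set ℝ, MeasurableSet Δ₁ → MeasurableSet Δ₂ →
    E Δ₁ * E Δ₂ = E (Δ₁ ∩ Δ₂)
  map_univ : E Set.univ = 1
  countably_additive : ∀ Δ : ℕ → Set ℝ, (∀ n, MeasurableSet (Δ n)) →
    Pairwise (Function.onFun Disjoint Δ) →
    ∀ x : H, HasSum (fun n => E (Δ n) x) (E (⋃ n, Δ n) x)
  commutes : ∀ Δ : Set ℝ, MeasurableSet Δ → Commute T (E Δ)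
  spectrum_loc : ∀ Δ : Set ℝ, MeasurableSet Δ → ∀ x : H, E Δ x = x →
    ∀ μ : ℝ, Metric.infDist μ Δ * ‖x‖ ≤ ‖T x - (μ : ℂ) • x‖

/-!
We may assume `convexHull σ ∩ Δ = ∅`. Since `E_A` vanishes outside `[-‖A‖ - 1, ‖A‖ + 1]`, we
may also assume `σ` bounded, so `σ ⊆ [c - r, c + r]` with `c ± r = sup σ, inf σ`, and every
point of `Δ` lies at distance at least `r + d` from `c`, where `d = dist(σ, Δ)`.
Put `P = E_A(σ)`, `Q = E_B(Δ)`, `A' = A - c`, `B' = B - c`. The quadratic form of `A` on the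
range of `P` takes values in `[c - r, c + r]`, so `‖A' P‖ ≤ r`; on the range of `Q`,
`‖B' x‖ ≥ (r + d) ‖x‖`. The identity `P Q B' = A' P · P Q - P (A - B) Q` then gives
`(r + d) ‖P Q‖ = (r + d) ‖Q P‖ ≤ ‖B' Q P‖ ≤ r ‖P Q‖ + ‖A - B‖`.
-/

open Metric Set Filter ContinuousLinearMap RCLike
open scoped InnerProductSpace

theorem nonpos_of_forall_gt_mul_le {b K X : ℝ} (h : ∀ μ > b, μ * X ≤ K) : X ≤ 0 := by
  by_contra! hX
  obtain ⟨μ, hμK, hμb⟩ :=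
    ((tendsto_id.atTop_mul_const hX).eventually_gt_atTop K).and (eventually_gt_atTop b) |>.exists
  exact (h μ hμb).not_gt hμK

theorem forall_lt_or_forall_gt_of_notMem_convexHull {s : Set ℝ} {x : ℝ}
    (hx : x ∉ convexHull ℝ s) : (∀ y ∈ s, x < y) ∨ ∀ y ∈ s, y < x := by
  by_contra! h
  obtain ⟨⟨y₁, hy₁, hy₁x⟩, ⟨y₂, hy₂, hxy₂⟩⟩ := h
  exact hx <| (convex_convexHull ℝ s).ordConnected.out (subset_convexHull ℝ s hy₁)
    (subset_convexHull ℝ s hy₂) ⟨hy₁x, hxy₂⟩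

theorem add_le_dist_of_notMem_convexHull {s : Set ℝ} (hne : s.Nonempty) {x d : ℝ}
    (hx : x ∉ convexHull ℝ s) (hd : ∀ y ∈ s, d ≤ dist y x) :
    (sSup s - sInf s) / 2 + d ≤ dist ((sInf s + sSup s) / 2) x := by
  rw [Real.dist_eq]
  rcases forall_lt_or_forall_gt_of_notMem_convexHull hx with hlt | hgt
  · have : x + d ≤ sInf s := le_csInf hne fun y hy => by
      have := hd y hy
      rw [Real.dist_eq, abs_of_pos (sub_pos.2 (hlt y hy))] at this
      linarith
    linarith [le_abs_self ((sInf s + sSup s) / 2 - x)]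
  · have : sSup s ≤ x - d := csSup_le hne fun y hy => by
      have := hd y hy
      rw [Real.dist_eq, abs_of_neg (sub_neg.2 (hgt y hy))] at this
      linarith
    linarith [neg_abs_le ((sInf s + sSup s) / 2 - x)]

theorem mul_norm_mul_le_norm_sub {R : Type*} [NonUnitalNormedRing R] [StarRing R] [CStarRing R]
    {a b p q : R} (hb : IsSelfAdjoint b) (hp : IsStarProjection p) (hq : IsStarProjection q)
    (hap : Commute a p) (hbq : Commute b q) {r d : ℝ} (ha : ‖a * p‖ ≤ r)
    (hbqp : (r + d) * ‖q * p‖ ≤ ‖b * (q * p)‖) : d * ‖p * q‖ ≤ ‖a - b‖ := by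
  have hqp : ‖q * p‖ = ‖p * q‖ := by
    rw [← norm_star (p * q), star_mul, hp.isSelfAdjoint.star_eq, hq.isSelfAdjoint.star_eq]
  have hbqp' : ‖b * (q * p)‖ = ‖p * q * b‖ := by
    rw [← norm_star (p * q * b), star_mul, star_mul, hp.isSelfAdjoint.star_eq,
      hq.isSelfAdjoint.star_eq, hb.star_eq]
  have hsylv : p * q * b = a * p * (p * q) - p * (a - b) * q := by
    have hap' : a * p * (p * q) = p * a * q := by
      rw [mul_assoc, ← mul_assoc p, hp.isIdempotentElem.eq, ← mul_assoc, hap.eq]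
    have hbq' : p * q * b = p * b * q := by rw [mul_assoc, ← hbq.eq, mul_assoc]
    rw [hap', hbq', mul_sub, sub_mul, sub_sub_cancel]
  have hab : ‖p * (a - b) * q‖ ≤ ‖a - b‖ := by
    calc ‖p * (a - b) * q‖ ≤ ‖p‖ * ‖a - b‖ * ‖q‖ := norm_mul₃_le
      _ ≤ 1 * ‖a - b‖ * 1 := by gcongr <;> exact IsStarProjection.norm_le _ ‹_›
      _ = ‖a - b‖ := by ring
  have : (r + d) * ‖p * q‖ ≤ r * ‖p * q‖ + ‖a - b‖ :=
    calc (r + d) * ‖p * q‖ ≤ ‖p * q * b‖ := by rw [← hqp, ← hbqp']; exact hbqp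
      _ ≤ ‖a * p‖ * ‖p * q‖ + ‖p * (a - b) * q‖ := by
        rw [hsylv]; exact (norm_sub_le _ _).trans (by gcongr; exact norm_mul_le _ _)
      _ ≤ r * ‖p * q‖ + ‖a - b‖ := by gcongr
  linarith

theorem IsSelfAdjoint.sub_ofReal_smul_one {R : Type*} [Ring R] [StarRing R] [Module ℂ R]
    [StarModule ℂ R] {a : R} (ha : IsSelfAdjoint a) (c : ℝ) :
    IsSelfAdjoint (a - (c : ℂ) • 1) :=
  ha.sub (IsSelfAdjoint.smul (Complex.conj_ofReal c) (.one _))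

section InnerProduct

variable {𝕜 E : Type*} [RCLike 𝕜] [NormedAddCommGroup E] [InnerProductSpace 𝕜 E]

theorem ContinuousLinearMap.norm_le_of_forall_abs_re_inner_le {S : E →L[𝕜] E}
    (hS : (S : E →ₗ[𝕜] E).IsSymmetric) {r : ℝ} (hr : 0 ≤ r)
    (h : ∀ x, |re ⟪S x, x⟫_𝕜| ≤ r * ‖x‖ ^ 2) : ‖S‖ ≤ r := by
  rw [S.norm_eq_iSup_rayleighQuotient hS]
  refine ciSup_le fun x => ?_
  rcases eq_or_ne x 0 with rfl | hx
  · simpa using hr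
  rw [rayleighQuotient, reApplyInnerSelf_apply, abs_div, abs_sq, div_le_iff₀ (by positivity)]
  exact h x

theorem ContinuousLinearMap.mul_norm_le_norm_of_forall {F G : Type*} [NormedAddCommGroup F]
    [NormedSpace 𝕜 F] [NormedAddCommGroup G] [NormedSpace 𝕜 G] {f : E →L[𝕜] F} {g : E →L[𝕜] G}
    {C : ℝ} (h : ∀ x, C * ‖f x‖ ≤ ‖g x‖) : C * ‖f‖ ≤ ‖g‖ := by
  rcases le_or_gt C 0 with hC | hC
  · exact (mul_nonpos_of_nonpos_of_nonneg hC (norm_nonneg f)).trans (norm_nonneg g)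
  rw [mul_comm, ← le_div_iff₀ hC]
  refine f.opNorm_le_bound (by positivity) fun x => ?_
  rw [div_mul_eq_mul_div, le_div_iff₀ hC, mul_comm]
  exact (h x).trans (g.le_opNorm x)

end InnerProduct

theorem norm_sub_ofReal_smul_sq {E : Type*} [NormedAddCommGroup E] [InnerProductSpace ℂ E]
    (v x : E) (μ : ℝ) :
    ‖v - (μ : ℂ) • x‖ ^ 2 = ‖v‖ ^ 2 - 2 * μ * re ⟪v, x⟫_ℂ + μ ^ 2 * ‖x‖ ^ 2 := by
  rw [norm_sub_sq (𝕜 := ℂ), inner_smul_right, re_to_complex, re_to_complex, Complex.re_ofReal_mul,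
    norm_smul, Complex.norm_real, Real.norm_eq_abs, mul_pow, sq_abs]
  ring

namespace IsSpectralMeasure

variable {H : Type*} [NormedAddCommGroup H] [InnerProductSpace ℂ H] [CompleteSpace H]
  {T : H →L[ℂ] H} {E : Set ℝ → H →L[ℂ] H} {s : Set ℝ}

theorem map_empty (hE : IsSpectralMeasure T E) : E ∅ = 0 := by
  ext x
  have h := hE.countably_additive (fun _ => ∅) (fun _ => .empty)
    (fun _ _ _ => disjoint_bot_left) x
  rw [iUnion_empty] at h
  exact (summable_const_iff _).1 h.summable

theorem map_union (hE : IsSpectralMeasure T E) {t : Set ℝ} (hs : MeasurableSet s)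
    (ht : MeasurableSet t) (hst : Disjoint s t) : E (s ∪ t) = E s + E t := by
  classical
  let f : ℕ → Set ℝ := fun n => if n = 0 then s else if n = 1 then t else ∅
  have hf : ∀ n, MeasurableSet (f n) := fun n => by
    simp only [f]; split_ifs <;> first | exact hs | exact ht | exact .empty
  have hdisj : Pairwise (Function.onFun Disjoint f) := fun i j hij => by
    simp only [Function.onFun, f]
    split_ifs <;> first | omega | exact hst | exact hst.symm | simp
  have hU : ⋃ n, f n = s ∪ t := by
    ext y
    simp only [mem_iUnion, mem_union, f]
    constructor
    · rintro ⟨n, hn⟩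
      split_ifs at hn <;> simp_all
    · rintro (hy | hy)
      exacts [⟨0, by simpa using hy⟩, ⟨1, by simpa using hy⟩]
  ext x
  have h := hE.countably_additive f hf hdisj x
  rw [hU] at h
  refine h.unique ?_
  simpa [Finset.sum_range_succ, f] using hasSum_sum_of_ne_finset_zero (f := fun n => E (f n) x)
    (s := Finset.range 2) fun n hn => by
      simp [f, show n ≠ 0 by simp at hn; omega, show n ≠ 1 by simp at hn; omega, hE.map_empty]

theorem isStarProjection (hE : IsSpectralMeasure T E) (hs : MeasurableSet s) :
    IsStarProjection (E s) :=
  ⟨by rw [IsIdempotentElem, hE.map_inter s s hs hs, inter_self], hE.isSelfAdjoint s hs⟩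

theorem apply_apply (hE : IsSpectralMeasure T E) (hs : MeasurableSet s) (x : H) :
    E s (E s x) = E s x :=
  DFunLike.congr_fun (hE.isStarProjection hs).isIdempotentElem.eq x

theorem mul_norm_le_norm_sub_smul (hE : IsSpectralMeasure T E) (hs : MeasurableSet s)
    {μ t : ℝ} (ht : ∀ y ∈ s, t ≤ dist μ y) {x : H} (hx : E s x = x) :
    t * ‖x‖ ≤ ‖T x - (μ : ℂ) • x‖ := by
  rcases s.eq_empty_or_nonempty with rfl | hne
  · rw [← hx, hE.map_empty]
    simp
  exact (mul_le_mul_of_nonneg_right ((le_infDist hne).2 ht) (norm_nonneg x)).trans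
    (hE.spectrum_loc s hs x hx μ)

theorem map_eq_zero_of_norm_lt (hE : IsSpectralMeasure T E) (hs : MeasurableSet s) {M : ℝ}
    (hM : ‖T‖ < M) (h : ∀ y ∈ s, M ≤ |y|) : E s = 0 := by
  ext z
  have hle := hE.mul_norm_le_norm_sub_smul hs (μ := 0)
    (fun y hy => by simpa [Real.dist_eq] using h y hy) (hE.apply_apply hs z)
  rw [Complex.ofReal_zero, zero_smul, sub_zero] at hle
  have := hle.trans (T.le_opNorm _)
  simpa using (by nlinarith [norm_nonneg (E s z)] : ‖E s z‖ ≤ 0)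

theorem map_eq_map_inter_Icc (hE : IsSpectralMeasure T E) (hs : MeasurableSet s) {M : ℝ}
    (hM : ‖T‖ < M) : E s = E (s ∩ Icc (-M) M) := by
  conv_lhs => rw [← inter_union_sdiff s (Icc (-M) M)]
  rw [hE.map_union (hs.inter measurableSet_Icc) (hs.diff measurableSet_Icc)
    disjoint_sdiff_inter.symm, hE.map_eq_zero_of_norm_lt (hs.diff measurableSet_Icc) hM, add_zero]
  intro y hy
  by_contra! hlt
  exact hy.2 (abs_le.1 hlt.le)

theorem re_inner_le (hE : IsSpectralMeasure T E) (hs : MeasurableSet s) {b : ℝ}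
    (hb : ∀ y ∈ s, y ≤ b) {x : H} (hx : E s x = x) : re ⟪T x, x⟫_ℂ ≤ b * ‖x‖ ^ 2 := by
  suffices 2 * (re ⟪T x, x⟫_ℂ - b * ‖x‖ ^ 2) ≤ 0 by linarith
  refine nonpos_of_forall_gt_mul_le (b := b) (K := ‖T x‖ ^ 2 - b ^ 2 * ‖x‖ ^ 2) fun μ hμ => ?_
  have h := hE.mul_norm_le_norm_sub_smul hs (t := μ - b) (μ := μ)
    (fun y hy => (by linarith [hb y hy] : μ - b ≤ μ - y).trans (le_abs_self _)) hx
  have h2 := pow_le_pow_left₀ (mul_nonneg (sub_nonneg.2 hμ.le) (norm_nonneg x)) h 2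
  rw [norm_sub_ofReal_smul_sq] at h2
  linear_combination h2

theorem le_re_inner (hE : IsSpectralMeasure T E) (hs : MeasurableSet s) {a : ℝ}
    (ha : ∀ y ∈ s, a ≤ y) {x : H} (hx : E s x = x) : a * ‖x‖ ^ 2 ≤ re ⟪T x, x⟫_ℂ := by
  suffices 2 * (a * ‖x‖ ^ 2 - re ⟪T x, x⟫_ℂ) ≤ 0 by linarith
  refine nonpos_of_forall_gt_mul_le (b := -a) (K := ‖T x‖ ^ 2 - a ^ 2 * ‖x‖ ^ 2) fun μ hμ => ?_
  have h := hE.mul_norm_le_norm_sub_smul hs (t := μ + a) (μ := -μ)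
    (fun y hy => (by linarith [ha y hy] : μ + a ≤ -(-μ - y)).trans (neg_le_abs _)) hx
  have h2 := pow_le_pow_left₀ (mul_nonneg (by linarith) (norm_nonneg x)) h 2
  rw [norm_sub_ofReal_smul_sq] at h2
  linear_combination h2

theorem commute_sub_smul_one (hE : IsSpectralMeasure T E) (hs : MeasurableSet s) (c : ℂ) :
    Commute (T - c • 1) (E s) :=
  (hE.commutes s hs).sub_left ((Commute.one_left _).smul_left c)

theorem norm_sub_smul_one_mul_le (hE : IsSpectralMeasure T E) (hT : IsSelfAdjoint T)
    (hs : MeasurableSet s) {c r : ℝ} (hr : 0 ≤ r) (hsr : s ⊆ closedBall c r) :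
    ‖(T - (c : ℂ) • 1) * E s‖ ≤ r := by
  set S := T - (c : ℂ) • 1
  have hP := hE.isStarProjection hs
  have hS : IsSelfAdjoint S := hT.sub_ofReal_smul_one c
  -- Compressing `S` to the range of `E s` makes it self-adjoint without changing `S * E s`.
  have hSP : S * E s = E s * S * E s := by
    rw [mul_assoc, (hE.commute_sub_smul_one hs c).eq, ← mul_assoc, hP.isIdempotentElem.eq]
  have hPSP : IsSelfAdjoint (E s * S * E s) := by
    simpa [hP.isSelfAdjoint.star_eq] using hS.conjugate (E s)
  rw [hSP]
  refine norm_le_of_forall_abs_re_inner_le hPSP.isSymmetric hr fun x => ?_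
  set y := E s x
  have hy : E s y = y := hE.apply_apply hs x
  have hinner : re ⟪(E s * S * E s) x, x⟫_ℂ = re ⟪T y, y⟫_ℂ - c * ‖y‖ ^ 2 := by
    have hsymm : ⟪E s (S y), x⟫_ℂ = ⟪S y, y⟫_ℂ := hP.isSelfAdjoint.isSymmetric (S y) x
    change re ⟪E s (S y), x⟫_ℂ = _
    rw [hsymm]
    simp [S, ← Complex.ofReal_pow]
  have hlow := hE.le_re_inner hs (a := c - r)
    (fun z hz => by linarith [(abs_le.1 (mem_closedBall.1 (hsr hz))).1]) hy
  have hup := hE.re_inner_le hs (b := c + r)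
    (fun z hz => by linarith [(abs_le.1 (mem_closedBall.1 (hsr hz))).2]) hy
  have hyx : ‖y‖ ^ 2 ≤ ‖x‖ ^ 2 := by
    gcongr
    simpa using (E s).le_of_opNorm_le (hP.norm_le _) x
  rw [hinner, abs_le]
  constructor <;> nlinarith

end IsSpectralMeasure

theorem sInf_dist_mul_norm_mul_le_of_disjoint_convexHull {H : Type*} [NormedAddCommGroup H]
    [InnerProductSpace ℂ H] [CompleteSpace H] {A B : H →L[ℂ] H} (hA : IsSelfAdjoint A)
    (hB : IsSelfAdjoint B) {σ Δ : Set ℝ} (hσ : MeasurableSet σ) (hΔ : MeasurableSet Δ)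
    (hdisj : Disjoint (convexHull ℝ σ) Δ) {EA EB : Set ℝ → H →L[ℂ] H}
    (hEA : IsSpectralMeasure A EA) (hEB : IsSpectralMeasure B EB) :
    sInf (image2 dist σ Δ) * ‖EA σ * EB Δ‖ ≤ ‖A - B‖ := by
  set d := sInf (image2 dist σ Δ)
  have hd : ∀ y ∈ σ, ∀ l ∈ Δ, d ≤ dist y l := fun y hy l hl =>
    csInf_le ⟨0, forall_mem_image2.2 fun _ _ _ _ => dist_nonneg⟩ (mem_image2_of_mem hy hl)
  rw [hEA.map_eq_map_inter_Icc hσ (lt_add_one ‖A‖)]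
  set σ' := σ ∩ Icc (-(‖A‖ + 1)) (‖A‖ + 1)
  have hσ' : MeasurableSet σ' := hσ.inter measurableSet_Icc
  rcases σ'.eq_empty_or_nonempty with hemp | hne
  · rw [hemp, hEA.map_empty, zero_mul, norm_zero, mul_zero]
    exact norm_nonneg _
  have hbdd : BddBelow σ' ∧ BddAbove σ' :=
    ⟨bddBelow_Icc.mono inter_subset_right, bddAbove_Icc.mono inter_subset_right⟩
  set c := (sInf σ' + sSup σ') / 2 with hc_def
  set r := (sSup σ' - sInf σ') / 2 with hr_def
  have hr0 : 0 ≤ r := by linarith [csInf_le_csSup hne hbdd.1 hbdd.2]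
  have hball : σ' ⊆ closedBall c r := fun y hy => by
    rw [mem_closedBall, Real.dist_eq, abs_le]
    constructor <;> linarith [csInf_le hbdd.1 hy, le_csSup hbdd.2 hy]
  have hsep : ∀ l ∈ Δ, r + d ≤ dist c l := fun l hl =>
    add_le_dist_of_notMem_convexHull hne
      (fun h => disjoint_left.1 hdisj (convexHull_mono inter_subset_left h) hl)
      fun y hy => hd y hy.1 l hl
  calc d * ‖EA σ' * EB Δ‖ ≤ ‖(A - (c : ℂ) • 1) - (B - (c : ℂ) • 1)‖ := by
        refine mul_norm_mul_le_norm_sub (hB.sub_ofReal_smul_one c) (hEA.isStarProjection hσ')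
          (hEB.isStarProjection hΔ) (hEA.commute_sub_smul_one hσ' c)
          (hEB.commute_sub_smul_one hΔ c) (hEA.norm_sub_smul_one_mul_le hA hσ' hr0 hball) ?_
        exact mul_norm_le_norm_of_forall fun x =>
          hEB.mul_norm_le_norm_sub_smul hΔ hsep (hEB.apply_apply hΔ _)
    _ = ‖A - B‖ := by rw [sub_sub_sub_cancel_right]

/-- **Proposition (second part).** For bounded self-adjoint operators `A`, `B` and Borel
sets `σ`, `Δ` such that the convex hull of `σ` does not intersect `Δ` or the convex hull of
`Δ` does not intersect `σ`, one has `dist(σ, Δ) ‖E_A(σ) E_B(Δ)‖ ≤ ‖A − B‖`. -/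
theorem dist_mul_norm_proj_mul_proj_le_of_convexHull_disjoint
    {H : Type*} [NormedAddCommGroup H] [InnerProductSpace ℂ H] [CompleteSpace H]
    (A B : H →L[ℂ] H) (hA : IsSelfAdjoint A) (hB : IsSelfAdjoint B)
    (σ Δ : Set ℝ) (hσ : MeasurableSet σ) (hΔ : MeasurableSet Δ)
    (hconv : Disjoint (convexHull ℝ σ) Δ ∨ Disjoint (convexHull ℝ Δ) σ)
    (EA EB : Set ℝ → H →L[ℂ] H) (hEA : IsSpectralMeasure A EA) (hEB : IsSpectralMeasure B EB) :
    sInf (Set.image2 dist σ Δ) * ‖EA σ * EB Δ‖ ≤ ‖A - B‖ := by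
  rcases hconv with h | h
  · exact sInf_dist_mul_norm_mul_le_of_disjoint_convexHull hA hB hσ hΔ h hEA hEB
  · have hswap := sInf_dist_mul_norm_mul_le_of_disjoint_convexHull hB hA hΔ hσ h hEB hEA
    rwa [image2_swap, image2_congr fun _ _ _ _ => dist_comm _ _, norm_sub_rev,
      ← norm_star (EB Δ * EA σ), star_mul, (hEB.isSelfAdjoint Δ hΔ).star_eq,
      (hEA.isSelfAdjoint σ hσ).star_eq] at hswap
end

section
/- The function g(x) = (π/2)·x + x·tan((1/2)·arctan(2x)) − 1 is strictly increasing on the positive semi-axis (0, ∞) and has a unique positive root x = (3π − √(π² + 32))/(π² − 4); consequently, for d > 0, the inequality 0 ≤ v < ((3π − √(π² + 32))/(π² − 4))·d implies (π/2)·v/(d − v·tan((1/2)·arctan(2v/d))) < 1. -/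
open scoped Real

lemma key_tan_half (x : ℝ) : x * Real.tan (Real.arctan (2 * x) / 2)
    = (Real.sqrt (1 + 4 * x ^ 2) - 1) / 2 := by
  set θ := Real.arctan (2 * x) with hθ
  have hmem := Real.arctan_mem_Ioo (2 * x)
  have hc2 : 0 < Real.cos (θ / 2) := by
    apply Real.cos_pos_of_mem_Ioo
    constructor <;> [linarith [hmem.1, Real.pi_pos]; linarith [hmem.2, Real.pi_pos]]
  have hs : Real.sqrt (1 + 4 * x ^ 2) = Real.sqrt (1 + (2 * x) ^ 2) := by ring_nf
  have hs2 : Real.sqrt (1 + 4 * x ^ 2) ^ 2 = 1 + 4 * x ^ 2 :=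
    Real.sq_sqrt (by positivity)
  have hspos : (0:ℝ) < Real.sqrt (1 + 4 * x ^ 2) := by positivity
  set s := Real.sqrt (1 + 4 * x ^ 2) with hsdef
  have hsin : Real.sin θ = 2 * x / s := by rw [hθ, Real.sin_arctan, ← hs]
  have hcos : Real.cos θ = 1 / s := by rw [hθ, Real.cos_arctan, ← hs]
  have h1 : 2 * x / s = 2 * Real.sin (θ / 2) * Real.cos (θ / 2) := by
    rw [← hsin, ← Real.sin_two_mul]; ring_nf
  have h2 : 1 / s = 2 * Real.cos (θ / 2) ^ 2 - 1 := by
    rw [← hcos, ← Real.cos_two_mul]; ring_nf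
  have hcc : 2 * s * Real.cos (θ / 2) ^ 2 = s + 1 := by
    field_simp at h2; linarith
  have hσ : Real.sin (θ / 2) = x / (s * Real.cos (θ / 2)) := by
    field_simp at h1 ⊢; linarith
  rw [Real.tan_eq_sin_div_cos, hσ]
  field_simp
  nlinarith [hcc, hs2, hc2, hspos]

lemma sqrt_one_ge (x : ℝ) : 1 ≤ Real.sqrt (1 + 4 * x ^ 2) := by
  nlinarith [Real.sq_sqrt (show (0:ℝ) ≤ 1 + 4 * x ^ 2 by positivity),
    Real.sqrt_nonneg (1 + 4 * x ^ 2), sq_nonneg x,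
    sq_nonneg (Real.sqrt (1 + 4 * x ^ 2) - 1)]

/-- The function `g(x) = (π/2) x + x tan((1/2) arctan (2x)) − 1` is strictly increasing on
`(0, ∞)` and has the unique positive root `x = (3π − √(π² + 32))/(π² − 4)`; consequently,
for `d > 0`, `0 ≤ v < ((3π − √(π² + 32))/(π² − 4)) d` implies
`(π/2) v / (d − v tan((1/2) arctan(2v/d))) < 1`. -/
theorem strictMonoOn_and_root_pi_mul_tan_half_arctan :
    StrictMonoOn
      (fun x : ℝ => π / 2 * x + x * Real.tan (Real.arctan (2 * x) / 2) - 1) (Set.Ioi 0) ∧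
    (π / 2 * ((3 * π - Real.sqrt (π ^ 2 + 32)) / (π ^ 2 - 4)) +
      (3 * π - Real.sqrt (π ^ 2 + 32)) / (π ^ 2 - 4) *
        Real.tan (Real.arctan (2 * ((3 * π - Real.sqrt (π ^ 2 + 32)) / (π ^ 2 - 4))) / 2)
        - 1 = 0) ∧
    (0 < (3 * π - Real.sqrt (π ^ 2 + 32)) / (π ^ 2 - 4)) ∧
    (∀ x : ℝ, 0 < x →
      π / 2 * x + x * Real.tan (Real.arctan (2 * x) / 2) - 1 = 0 →
      x = (3 * π - Real.sqrt (π ^ 2 + 32)) / (π ^ 2 - 4)) ∧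
    (∀ d v : ℝ, 0 < d → 0 ≤ v → v < (3 * π - Real.sqrt (π ^ 2 + 32)) / (π ^ 2 - 4) * d →
      π / 2 * v / (d - v * Real.tan (Real.arctan (2 * v / d) / 2)) < 1) := by
  have hπ : (3:ℝ) < π := Real.pi_gt_three
  have hπ4 : π < 4 := by linarith [Real.pi_lt_d2]
  have hden : (0:ℝ) < π ^ 2 - 4 := by nlinarith
  have hr2 : Real.sqrt (π ^ 2 + 32) ^ 2 = π ^ 2 + 32 := Real.sq_sqrt (by positivity)
  have hrpos : (0:ℝ) < Real.sqrt (π ^ 2 + 32) := by positivity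
  set r := Real.sqrt (π ^ 2 + 32) with hrdef
  have hrlt : r < 3 * π := by nlinarith
  set x₀ := (3 * π - r) / (π ^ 2 - 4) with hx₀
  have hx₀pos : 0 < x₀ := div_pos (by linarith) hden
  have hπr : 12 < π * r := by nlinarith
  -- strict monotonicity
  have hmono : StrictMonoOn
      (fun x : ℝ => π / 2 * x + x * Real.tan (Real.arctan (2 * x) / 2) - 1) (Set.Ioi 0) := by
    intro a ha b hb hab
    simp only [Set.mem_Ioi] at ha hb
    simp only [key_tan_half]
    have hsq : Real.sqrt (1 + 4 * a ^ 2) ≤ Real.sqrt (1 + 4 * b ^ 2) :=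
      Real.sqrt_le_sqrt (by nlinarith)
    have : π / 2 * a < π / 2 * b := by nlinarith [Real.pi_pos]
    linarith
  -- the root
  have hval : 3 - π * x₀ = (π * r - 12) / (π ^ 2 - 4) := by
    rw [hx₀]; field_simp; ring
  have hnn : 0 ≤ 3 - π * x₀ := by rw [hval]; exact div_nonneg (by linarith) hden.le
  have hsq : (3 - π * x₀) ^ 2 = 1 + 4 * x₀ ^ 2 := by
    rw [hx₀]; field_simp; nlinarith [hr2]
  have hroot0 : Real.sqrt (1 + 4 * x₀ ^ 2) = 3 - π * x₀ := by
    rw [← hsq, Real.sqrt_sq hnn]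
  have hroot : π / 2 * x₀ + x₀ * Real.tan (Real.arctan (2 * x₀) / 2) - 1 = 0 := by
    rw [key_tan_half, hroot0]; ring
  refine ⟨hmono, hroot, hx₀pos, ?_, ?_⟩
  · intro x hx hgx
    exact hmono.injOn hx hx₀pos (by rw [hgx, hroot])
  · intro d v hd hv hvlt
    rcases eq_or_lt_of_le hv with h0 | hv
    · rw [← h0]; simp [hd]
    set x := v / d with hxdef
    have hx : 0 < x := div_pos hv hd
    have hxlt : x < x₀ := by rw [hxdef, div_lt_iff₀ hd]; linarith [hvlt]
    have hgx : π / 2 * x + x * Real.tan (Real.arctan (2 * x) / 2) - 1 < 0 := by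
      have := hmono hx hx₀pos hxlt
      simpa [hroot] using this
    rw [key_tan_half] at hgx
    have h2x : 2 * v / d = 2 * x := by rw [hxdef]; ring
    have hvd : v = d * x := by rw [hxdef]; field_simp
    rw [h2x]
    have hterm : v * Real.tan (Real.arctan (2 * x) / 2)
        = d * ((Real.sqrt (1 + 4 * x ^ 2) - 1) / 2) := by
      rw [hvd, mul_assoc, key_tan_half]
    rw [hterm]
    have hge1 := sqrt_one_ge x
    have hD : 0 < d - d * ((Real.sqrt (1 + 4 * x ^ 2) - 1) / 2) := by
      nlinarith [Real.pi_pos]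
    rw [div_lt_one hD, hvd]
    nlinarith [Real.pi_pos]
end

section
/- Let B be the 4×4 real symmetric matrix with rows (−3/2, √3/2, 0, 0), (√3/2, −1/2, 0, 0), (0, 0, 1/2, √3/2), (0, 0, √3/2, 3/2). Then the spectrum of B consists exactly of the three eigenvalues −2, 0, and 2, where 0 is an eigenvalue of multiplicity two. In particular, writing B = A + V with A = diag(−3/2, −1/2, 1/2, 3/2) and V the off-diagonal part, σ = {−3/2, 1/2}, Σ = {−1/2, 3/2}, one has d = dist(σ, Σ) = 1, ‖V‖ = (√3/2)·d, V is off-diagonal with respect to ℂ⁴ = Ran E_A(σ) ⊕ Ran E_A(Σ), and the open 1/2-neighborhood O_{1/2}(σ) = (−2, −1) ∪ (0, 1) does not intersect spec(B). -/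
open scoped Classical

set_option maxHeartbeats 1000000 in
set_option synthInstance.maxHeartbeats 1000000 in
/-- **Example 1.4.** Let `B` be the 4×4 real symmetric matrix with rows
`(−3/2, √3/2, 0, 0)`, `(√3/2, −1/2, 0, 0)`, `(0, 0, 1/2, √3/2)`, `(0, 0, √3/2, 3/2)`.
Its spectrum is exactly `{−2, 0, 2}`, with `0` an eigenvalue of multiplicity two. Writing
`B = A + V` with `A = diag(−3/2, −1/2, 1/2, 3/2)` and `V = B − A` the off-diagonal part,
and `σ = {−3/2, 1/2}`, `Σ = {−1/2, 3/2}`, one has `d = dist(σ, Σ) = 1`, `‖V‖ = (√3/2) d`,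
`V` is off-diagonal with respect to `ℂ⁴ = Ran E_A(σ) ⊕ Ran E_A(Σ)` (where `E_A(σ)` is the
diagonal spectral projection `Pσ` of the diagonal matrix `A` and `E_A(Σ) = 1 − Pσ`), while
the open `1/2`-neighborhood `O_{1/2}(σ) = (−2, −1) ∪ (0, 1)` of `σ` does not intersect
`spec B`. -/
theorem example_four_by_four_sqrt_three_halves
    (B : Matrix (Fin 4) (Fin 4) ℂ)
    (hB : B = !![-3/2, ((Real.sqrt 3 / 2 : ℝ) : ℂ), 0, 0;
                 ((Real.sqrt 3 / 2 : ℝ) : ℂ), -1/2, 0, 0;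
                 0, 0, 1/2, ((Real.sqrt 3 / 2 : ℝ) : ℂ);
                 0, 0, ((Real.sqrt 3 / 2 : ℝ) : ℂ), 3/2])
    (dv : Fin 4 → ℝ) (hdv : dv = ![-3/2, -1/2, 1/2, 3/2])
    (A V Pσ : Matrix (Fin 4) (Fin 4) ℂ)
    (hA : A = Matrix.diagonal fun i => (dv i : ℂ))
    (hV : V = B - A)
    (σ Sig : Set ℝ) (hσ : σ = {-3/2, 1/2}) (hSig : Sig = {-1/2, 3/2})
    (hPσ : Pσ = Matrix.diagonal fun i => if dv i ∈ σ then (1 : ℂ) else 0)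
    (d : ℝ) (hd : d = sInf (Set.image2 dist σ Sig)) :
    spectrum ℂ B = {-2, 0, 2} ∧
    Module.finrank ℂ ↥(Module.End.eigenspace (Matrix.toLin' B) 0) = 2 ∧
    d = 1 ∧
    ‖Matrix.toEuclideanCLM (𝕜 := ℂ) V‖ = Real.sqrt 3 / 2 * d ∧
    Pσ * V * Pσ = 0 ∧ (1 - Pσ) * V * (1 - Pσ) = 0 ∧
    Metric.thickening (1/2) σ = Set.Ioo (-2) (-1) ∪ Set.Ioo 0 1 ∧
    ∀ x : ℝ, x ∈ Metric.thickening (1/2) σ → (x : ℂ) ∉ spectrum ℂ B := by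
  have h3 : ((Real.sqrt 3 : ℝ) : ℂ) * ((Real.sqrt 3 : ℝ) : ℂ) = 3 := by
    rw [← Complex.ofReal_mul, Real.mul_self_sqrt (by norm_num)]; norm_num
  set s : ℂ := ((Real.sqrt 3 : ℝ) : ℂ) with hs
  -- determinant computation
  have hdet : ∀ μ : ℂ, ((algebraMap ℂ (Matrix (Fin 4) (Fin 4) ℂ)) μ - B).det
      = μ^2 * (μ - 2) * (μ + 2) := by
    intro μ
    have hM : ((algebraMap ℂ (Matrix (Fin 4) (Fin 4) ℂ)) μ - B)
      = !![μ + 3/2, -((Real.sqrt 3 / 2 : ℝ) : ℂ), 0, 0;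
           -((Real.sqrt 3 / 2 : ℝ) : ℂ), μ + 1/2, 0, 0;
           0, 0, μ - 1/2, -((Real.sqrt 3 / 2 : ℝ) : ℂ);
           0, 0, -((Real.sqrt 3 / 2 : ℝ) : ℂ), μ - 3/2] := by
      subst hB
      ext i j
      fin_cases i <;> fin_cases j <;>
        simp [Matrix.algebraMap_matrix_apply, Matrix.vecHead, Matrix.vecTail] <;> ring
    rw [hM]
    simp [Matrix.det_succ_row_zero, Fin.sum_univ_succ,
      show Fin.succAbove (1:Fin 4) 2 = 3 from rfl]
    linear_combination ((s^2 + 3)/16 - μ^2/2 - 3/8) * h3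
  -- the spectrum
  have hspec : spectrum ℂ B = {-2, 0, 2} := by
    ext μ
    rw [spectrum.mem_iff, Matrix.isUnit_iff_isUnit_det, isUnit_iff_ne_zero, not_not, hdet μ]
    simp only [Set.mem_insert_iff, Set.mem_singleton_iff, mul_eq_zero, pow_eq_zero_iff,
      two_ne_zero, sub_eq_zero, add_eq_zero_iff_eq_neg, ne_eq, OfNat.ofNat_ne_zero,
      not_false_eq_true]
    tauto
  -- d = 1
  have hd1 : d = 1 := by
    rw [hd, hσ, hSig]
    have h : Set.image2 dist ({-3/2, 1/2} : Set ℝ) ({-1/2, 3/2} : Set ℝ) = {1, 3} := by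
      rw [Set.image2_insert_left, Set.image2_singleton_left, Set.image_pair, Set.image_pair,
        show dist (-3/2:ℝ) (-1/2) = 1 by rw [Real.dist_eq]; norm_num,
        show dist (-3/2:ℝ) (3/2) = 3 by rw [Real.dist_eq]; norm_num,
        show dist (1/2:ℝ) (-1/2) = 1 by rw [Real.dist_eq]; norm_num,
        show dist (1/2:ℝ) (3/2) = 1 by rw [Real.dist_eq]; norm_num]
      ext r; simp
    rw [h, csInf_pair]
    norm_num
  -- explicit form of V
  have hVe : V = !![0, ((Real.sqrt 3 / 2 : ℝ) : ℂ), 0, 0;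
                 ((Real.sqrt 3 / 2 : ℝ) : ℂ), 0, 0, 0;
                 0, 0, 0, ((Real.sqrt 3 / 2 : ℝ) : ℂ);
                 0, 0, ((Real.sqrt 3 / 2 : ℝ) : ℂ), 0] := by
    rw [hV, hB, hA, hdv]
    ext i j
    fin_cases i <;> fin_cases j <;>
      simp [Matrix.diagonal_apply, Matrix.vecHead, Matrix.vecTail] <;>
      push_cast <;> ring
  -- thickening
  have hthick : Metric.thickening (1/2) σ = Set.Ioo (-2) (-1) ∪ Set.Ioo 0 1 := by
    rw [hσ, show ({-3/2, 1/2} : Set ℝ) = {-3/2} ∪ {1/2} by rw [Set.singleton_union],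
      Metric.thickening_union, Metric.thickening_singleton, Metric.thickening_singleton,
      Real.ball_eq_Ioo, Real.ball_eq_Ioo]
    norm_num
  refine ⟨hspec, ?_, hd1, ?_, ?_, ?_, hthick, ?_⟩
  · -- eigenspace dimension
    set v1 : Fin 4 → ℂ := ![1, s, 0, 0] with hv1
    set v2 : Fin 4 → ℂ := ![0, 0, -s, 1] with hv2
    have hker : Module.End.eigenspace (Matrix.toLin' B) 0 = Submodule.span ℂ {v1, v2} := by
      rw [Module.End.eigenspace_zero]
      apply le_antisymm
      · intro x hx
        rw [LinearMap.mem_ker, Matrix.toLin'_apply] at hx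
        have e0 := congrFun hx 0
        have e2 := congrFun hx 2
        simp [hB, Matrix.mulVec, dotProduct, Fin.sum_univ_four] at e0 e2
        rw [show ((Real.sqrt 3:ℝ):ℂ) = s from hs.symm] at e0 e2
        rw [Submodule.mem_span_pair]
        refine ⟨x 0, x 3, ?_⟩
        funext i
        fin_cases i <;> simp [hv1, hv2]
        · linear_combination (-(2*s)/3) * e0 + ((x 1)/3) * h3
        · linear_combination -2 * e2
      · rw [Submodule.span_le]
        rintro y (rfl | rfl) <;>
        · rw [SetLike.mem_coe, LinearMap.mem_ker, Matrix.toLin'_apply]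
          funext i
          fin_cases i <;>
            simp [hB, hv1, hv2, Matrix.mulVec, dotProduct, Fin.sum_univ_four] <;>
            push_cast <;> first
            | linear_combination (-1/2) * h3
            | linear_combination -h3
            | linear_combination (1/2) * h3
            | linear_combination h3
            | ring
    rw [hker]
    have li : LinearIndependent ℂ ![v1, v2] := by
      rw [LinearIndependent.pair_iff]
      intro a b hab
      have h0 := congrFun hab 0
      have h3' := congrFun hab 3
      simp [hv1, hv2] at h0 h3'
      exact ⟨h0, h3'⟩
    have hr : Set.range ![v1, v2] = {v1, v2} := by
      simp [Matrix.range_cons, Matrix.range_empty, Set.pair_comm]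
    calc Module.finrank ℂ ↥(Submodule.span ℂ {v1, v2})
        = Module.finrank ℂ ↥(Submodule.span ℂ (Set.range ![v1, v2])) := by rw [hr]
      _ = 2 := by rw [finrank_span_eq_card li]; simp
  · -- norm of V
    rw [hd1, mul_one]
    have hsq : star V * V = ((3/4 : ℂ)) • (1 : Matrix (Fin 4) (Fin 4) ℂ) := by
      ext i j
      fin_cases i <;> fin_cases j <;>
        simp [hVe, Matrix.mul_apply, Fin.sum_univ_four, Matrix.star_apply, Matrix.one_apply,
          Matrix.vecHead, Matrix.vecTail, Complex.conj_ofReal, map_ofNat] <;>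
        push_cast <;> linear_combination (1/4) * h3
    set T := Matrix.toEuclideanCLM (𝕜 := ℂ) V with hT
    have hTT : ‖T‖ * ‖T‖ = 3/4 := by
      rw [← CStarRing.norm_star_mul_self]
      have hTT' : star T * T = ((3/4 : ℂ)) • 1 := by
        rw [hT, ← map_star, ← map_mul, hsq, map_smul, map_one]
      rw [hTT', norm_smul (α := ℂ)
        (β := EuclideanSpace ℂ (Fin 4) →L[ℂ] EuclideanSpace ℂ (Fin 4)) (3/4 : ℂ) 1]
      simp
    have h2 : Real.sqrt 3 / 2 * (Real.sqrt 3 / 2) = 3/4 := by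
      rw [div_mul_div_comm, Real.mul_self_sqrt (by norm_num)]; norm_num
    nlinarith [norm_nonneg T, Real.sqrt_nonneg 3]
  · -- Pσ V Pσ = 0
    have hP : Pσ = Matrix.diagonal ![1, 0, 1, 0] := by
      rw [hPσ]
      ext i j
      fin_cases i <;> fin_cases j <;> norm_num [hdv, hσ, Matrix.diagonal_apply]
    ext i j
    fin_cases i <;> fin_cases j <;>
      simp [hP, hVe, Matrix.mul_apply, Fin.sum_univ_four, Matrix.diagonal_apply,
        Matrix.one_apply, Matrix.vecHead, Matrix.vecTail]
  · -- (1 - Pσ) V (1 - Pσ) = 0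
    have hP : Pσ = Matrix.diagonal ![1, 0, 1, 0] := by
      rw [hPσ]
      ext i j
      fin_cases i <;> fin_cases j <;> norm_num [hdv, hσ, Matrix.diagonal_apply]
    ext i j
    fin_cases i <;> fin_cases j <;>
      simp [hP, hVe, Matrix.mul_apply, Fin.sum_univ_four, Matrix.diagonal_apply,
        Matrix.one_apply, Matrix.vecHead, Matrix.vecTail]
  · -- the neighborhood misses the spectrum
    intro x hx hmem
    rw [hthick] at hx
    rw [hspec] at hmem
    simp only [Set.mem_insert_iff, Set.mem_singleton_iff] at hmem
    rcases hx with ⟨h1, h2⟩ | ⟨h1, h2⟩ <;> rcases hmem with h | h | h <;>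
      (first
        | have hr : x = (-2:ℝ) := by exact_mod_cast h
        | have hr : x = (0:ℝ) := by exact_mod_cast h
        | have hr : x = (2:ℝ) := by exact_mod_cast h) <;>
      linarith
end

section
/- Let B be the 3×3 real symmetric matrix with rows (−1, √2, 0), (√2, 0, 0), (0, 0, 1). Then the spectrum of B consists exactly of the two eigenvalues −2 and 1, where 1 is an eigenvalue of multiplicity two. In particular, writing B = A + V with A = diag(−1, 0, 1) and V the off-diagonal part, σ = {0}, Σ = {−1, 1}, one has K(σ) ∩ Σ = ∅, d = dist(σ, Σ) = 1, ‖V‖ = √2·d, V is off-diagonal with respect to ℂ³ = Ran E_A(σ) ⊕ Ran E_A(Σ), and the open 1-neighborhood O_1(σ) = (−1, 1) does not intersect spec(B). -/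
open scoped Classical

/-- **Example 1.5.** Let `B` be the 3×3 real symmetric matrix with rows `(−1, √2, 0)`,
`(√2, 0, 0)`, `(0, 0, 1)`. Its spectrum is exactly `{−2, 1}`, with `1` an eigenvalue of
multiplicity two. Writing `B = A + V` with `A = diag(−1, 0, 1)` and `V = B − A` the
off-diagonal part, and `σ = {0}`, `Σ = {−1, 1}`, one has `K(σ) ∩ Σ = ∅`,
`d = dist(σ, Σ) = 1`, `‖V‖ = √2 d`, `V` is off-diagonal with respect to
`ℂ³ = Ran E_A(σ) ⊕ Ran E_A(Σ)` (where `E_A(σ)` is the diagonal spectral projection `Pσ` of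
the diagonal matrix `A` and `E_A(Σ) = 1 − Pσ`), while the open `1`-neighborhood
`O_1(σ) = (−1, 1)` of `σ` does not intersect `spec B`. -/
theorem example_three_by_three_sqrt_two
    (B : Matrix (Fin 3) (Fin 3) ℂ)
    (hB : B = !![-1, ((Real.sqrt 2 : ℝ) : ℂ), 0;
                 ((Real.sqrt 2 : ℝ) : ℂ), 0, 0;
                 0, 0, 1])
    (dv : Fin 3 → ℝ) (hdv : dv = ![-1, 0, 1])
    (A V Pσ : Matrix (Fin 3) (Fin 3) ℂ)
    (hA : A = Matrix.diagonal fun i => (dv i : ℂ))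
    (hV : V = B - A)
    (σ Sig : Set ℝ) (hσ : σ = {0}) (hSig : Sig = {-1, 1})
    (hPσ : Pσ = Matrix.diagonal fun i => if dv i ∈ σ then (1 : ℂ) else 0)
    (d : ℝ) (hd : d = sInf (Set.image2 dist σ Sig)) :
    spectrum ℂ B = {-2, 1} ∧
    Module.finrank ℂ ↥(Module.End.eigenspace (Matrix.toLin' B) 1) = 2 ∧
    Disjoint (convexHull ℝ σ) Sig ∧
    d = 1 ∧
    ‖Matrix.toEuclideanCLM (𝕜 := ℂ) V‖ = Real.sqrt 2 * d ∧
    Pσ * V * Pσ = 0 ∧ (1 - Pσ) * V * (1 - Pσ) = 0 ∧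
    Metric.thickening 1 σ = Set.Ioo (-1) 1 ∧
    ∀ x : ℝ, x ∈ Metric.thickening 1 σ → (x : ℂ) ∉ spectrum ℂ B := by
  have h2 : ((Real.sqrt 2 : ℝ) : ℂ) * ((Real.sqrt 2 : ℝ) : ℂ) = 2 := by
    rw [← Complex.ofReal_mul, Real.mul_self_sqrt (by norm_num)]
    norm_num
  -- spectrum
  have hspec : spectrum ℂ B = {-2, 1} := by
    ext μ
    rw [spectrum.mem_iff, Matrix.isUnit_iff_isUnit_det, isUnit_iff_ne_zero, not_not]
    rw [Matrix.algebraMap_eq_diagonal]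
    rw [hB, Matrix.det_fin_three]
    simp [Matrix.diagonal, Matrix.sub_apply, Set.mem_insert_iff]
    constructor
    · intro h
      have hfac : (μ + 2) * (μ - 1) ^ 2 = 0 := by linear_combination h + (μ - 1) * h2
      rcases mul_eq_zero.mp hfac with h' | h'
      · left; linear_combination h'
      · right
        have := pow_eq_zero_iff (n := 2) (by norm_num) |>.mp h'
        linear_combination this
    · rintro (rfl | rfl)
      · linear_combination (3 : ℂ) * h2
      · ring
  -- eigenspace dimension
  have heig : Module.finrank ℂ ↥(Module.End.eigenspace (Matrix.toLin' B) 1) = 2 := by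
    set s : ℂ := ((Real.sqrt 2 : ℝ) : ℂ) with hs
    set f : Fin 2 → (Fin 3 → ℂ) := ![![1, s, 0], ![0, 0, 1]] with hf
    have hli : LinearIndependent ℂ f := by
      rw [hf, LinearIndependent.pair_iff]
      intro a b hab
      have h0 := congrFun hab 0
      have h22 := congrFun hab 2
      simp at h0 h22
      exact ⟨h0, h22⟩
    have heq : Module.End.eigenspace (Matrix.toLin' B) 1 = Submodule.span ℂ (Set.range f) := by
      apply le_antisymm
      · intro v hv
        rw [Module.End.mem_eigenspace_iff] at hv
        have h1 := congrFun hv 1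
        rw [hB] at h1
        simp [Matrix.toLin'_apply, Matrix.mulVec, dotProduct,
          Fin.sum_univ_three] at h1
        have : v = v 0 • f 0 + v 2 • f 1 := by
          funext i
          fin_cases i <;> simp [hf] <;> rw [← h1] <;> ring
        rw [this]
        exact Submodule.add_mem _
          (Submodule.smul_mem _ _ (Submodule.subset_span ⟨0, rfl⟩))
          (Submodule.smul_mem _ _ (Submodule.subset_span ⟨1, rfl⟩))
      · rw [Submodule.span_le]
        rintro _ ⟨i, rfl⟩
        rw [SetLike.mem_coe, Module.End.mem_eigenspace_iff, hB]
        fin_cases i <;>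
        · funext j
          fin_cases j <;>
            simp [hf, Matrix.toLin'_apply, Matrix.mulVec, dotProduct,
              Fin.sum_univ_three] <;>
            linear_combination h2
    rw [heq, finrank_span_eq_card hli]
    simp
  -- convex hull disjointness
  have hdisj : Disjoint (convexHull ℝ σ) Sig := by
    rw [hσ, hSig, convexHull_singleton]
    rw [Set.disjoint_left]
    rintro x rfl
    norm_num
  -- distance
  have hd1 : d = 1 := by
    have himg : Set.image2 dist σ Sig = {1} := by
      rw [hσ, hSig, Set.image2_singleton_left]
      ext x
      simp [Real.dist_eq]
      constructor
      · rintro (rfl | rfl) <;> norm_num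
      · rintro rfl; norm_num
    rw [hd, himg, csInf_singleton]
  -- V explicitly
  have hVex : V = !![0, ((Real.sqrt 2 : ℝ) : ℂ), 0;
                     ((Real.sqrt 2 : ℝ) : ℂ), 0, 0;
                     0, 0, 0] := by
    rw [hV, hB, hA, hdv]
    ext i j
    fin_cases i <;> fin_cases j <;>
      norm_num [Matrix.diagonal, Matrix.vecHead, Matrix.vecTail] <;> decide
  -- norm of V
  have hnorm : ‖Matrix.toEuclideanCLM (𝕜 := ℂ) V‖ = Real.sqrt 2 * d := by
    rw [hd1, mul_one]
    set T := Matrix.toEuclideanCLM (𝕜 := ℂ) V with hT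
    have happ : ∀ x : EuclideanSpace ℂ (Fin 3), ∀ i, T x i = V.mulVec (fun j => x j) i :=
      fun x i => rfl
    have hns : ‖((Real.sqrt 2 : ℝ) : ℂ)‖ = Real.sqrt 2 := by
      rw [Complex.norm_real, Real.norm_eq_abs, abs_of_nonneg (Real.sqrt_nonneg 2)]
    have hss : Real.sqrt 2 * Real.sqrt 2 = 2 := Real.mul_self_sqrt (by norm_num)
    apply le_antisymm
    · apply ContinuousLinearMap.opNorm_le_bound _ (Real.sqrt_nonneg 2)
      intro x
      rw [EuclideanSpace.norm_eq, EuclideanSpace.norm_eq,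
        ← Real.sqrt_mul (by norm_num : (0:ℝ) ≤ 2)]
      apply Real.sqrt_le_sqrt
      rw [Fin.sum_univ_three, Fin.sum_univ_three, happ x 0, happ x 1, happ x 2]
      simp [hVex, Matrix.mulVec, dotProduct, Fin.sum_univ_three, hns, norm_mul,
        mul_pow]
      nlinarith [norm_nonneg (x 0), norm_nonneg (x 1), norm_nonneg (x 2), hss,
        sq_nonneg (‖x 2‖)]
    · have h1 : ‖T (EuclideanSpace.single 0 1)‖ = Real.sqrt 2 := by
        rw [EuclideanSpace.norm_eq]
        have h0 : ∀ i, T (EuclideanSpace.single 0 1) i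
            = V.mulVec (fun j => EuclideanSpace.single (0 : Fin 3) (1:ℂ) j) i :=
          happ (EuclideanSpace.single 0 1)
        rw [Fin.sum_univ_three, h0 0, h0 1, h0 2]
        simp [hVex, Matrix.mulVec, dotProduct, Fin.sum_univ_three,
          EuclideanSpace.single_apply, hns]
      calc Real.sqrt 2 = ‖T (EuclideanSpace.single 0 1)‖ := h1.symm
      _ ≤ ‖T‖ * ‖EuclideanSpace.single (0 : Fin 3) (1:ℂ)‖ := T.le_opNorm _
      _ = ‖T‖ := by rw [EuclideanSpace.norm_single]; simp
  -- off-diagonal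
  have hPex : Pσ = Matrix.diagonal ![0, 1, 0] := by
    rw [hPσ, hdv, hσ]
    ext i j
    fin_cases i <;> fin_cases j <;> simp [Matrix.diagonal] <;> norm_num
  have hoff1 : Pσ * V * Pσ = 0 := by
    rw [hPex, hVex]
    ext i j
    fin_cases i <;> fin_cases j <;>
      simp [Matrix.mul_apply, Fin.sum_univ_three, Matrix.diagonal]
  have hoff2 : (1 - Pσ) * V * (1 - Pσ) = 0 := by
    rw [hPex, hVex]
    ext i j
    fin_cases i <;> fin_cases j <;>
      simp [Matrix.mul_apply, Fin.sum_univ_three, Matrix.diagonal, Matrix.one_apply,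
        Matrix.sub_apply]
  -- thickening
  have hthick : Metric.thickening 1 σ = Set.Ioo (-1) 1 := by
    rw [hσ, Metric.thickening_singleton, Real.ball_eq_Ioo]
    norm_num
  refine ⟨hspec, heig, hdisj, hd1, hnorm, hoff1, hoff2, hthick, ?_⟩
  intro x hx hmem
  rw [hthick] at hx
  rw [hspec] at hmem
  simp only [Set.mem_insert_iff, Set.mem_singleton_iff] at hmem
  rcases hmem with h | h
  · have : x = -2 := by exact_mod_cast h
    rw [this] at hx
    exact absurd hx.1 (by norm_num)
  · have : x = 1 := by exact_mod_cast h
    rw [this] at hx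
    exact absurd hx.2 (by norm_num)
end

section
/- Let P and Q be orthogonal projections on a Hilbert space H with ‖P − Q‖ < 1. Then Ran Q is the graph of a bounded linear operator X : Ran P → Ran P^⊥, i.e. Ran Q = { f + X f : f ∈ Ran P }, and ‖P − Q‖ = ‖X‖ / √(1 + ‖X‖²). -/
/-!
Put `s = (P - Q)²` and `b = (1 - s)⁻¹`; `s` commutes with `P` and `Q`, and `‖s‖ = ‖P - Q‖² < 1`.
The operator `Y = (1 - P) Q P b` satisfies `P + Y = Q P b` and `Q P b Q = Q`, so `Ran Q` is the
graph of `Y` over `Ran P`. Moreover `Y* Y = P (b - 1)` and `Y Y* = (1 - P) (b - 1)`. The positive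
element `b - 1 = s (1 - s)⁻¹` has norm at most `‖s‖ / (1 - ‖s‖)`, and this value lies in its
spectrum, hence in the spectrum of one of the two corners `P (b - 1)`, `(1 - P) (b - 1)`. By the
C*-identity both corners have norm `‖Y‖²`, so `‖Y‖² = ‖P - Q‖² / (1 - ‖P - Q‖²)`.
-/

open scoped Ring

theorem mul_eq_sub_one_of_one_sub_mul_eq_one {R : Type*} [Ring R] {a b : R}
    (h : (1 - a) * b = 1) : a * b = b - 1 := by
  rw [sub_mul, one_mul] at h
  rw [← h, sub_sub_cancel]

theorem Commute.ringInverse_right {M₀ : Type*} [MonoidWithZero M₀] {a b : M₀}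
    (h : Commute a b) : Commute a b⁻¹ʳ := by
  by_cases hb : IsUnit b
  · obtain ⟨u, rfl⟩ := hb
    rw [Ring.inverse_unit]
    exact h.units_inv_right
  · rw [Ring.inverse_non_unit _ hb]
    exact Commute.zero_right a

section Idempotent

variable {R : Type*} [Ring R] {p q : R}

theorem IsIdempotentElem.commute_sub_sq (hp : IsIdempotentElem p) (hq : IsIdempotentElem q) :
    Commute p ((p - q) ^ 2) := by
  simp only [Commute, SemiconjBy, sq, mul_sub, sub_mul, ← mul_assoc, hp.eq, hq.eq,
    hp.mul_mul_self]
  abel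

theorem IsIdempotentElem.mul_mul_self_eq_mul_one_sub_sub_sq (hp : IsIdempotentElem p)
    (hq : IsIdempotentElem q) : p * q * p = p * (1 - (p - q) ^ 2) := by
  simp only [sq, mul_sub, sub_mul, mul_one, ← mul_assoc, hp.eq, hq.eq]
  abel

theorem IsIdempotentElem.mul_mul_one_sub_mul_mul_self (hp : IsIdempotentElem p)
    (hq : IsIdempotentElem q) :
    p * q * (1 - p) * q * p = p * (p - q) ^ 2 * (1 - (p - q) ^ 2) := by
  simp only [sq, mul_sub, sub_mul, mul_one, ← mul_assoc, hp.eq, hq.eq,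
    hp.mul_mul_self, hq.mul_mul_self]
  abel

theorem IsIdempotentElem.one_sub_mul_mul_mul_mul_one_sub (hp : IsIdempotentElem p)
    (hq : IsIdempotentElem q) :
    (1 - p) * q * p * q * (1 - p) = (1 - p) * (p - q) ^ 2 * (1 - (p - q) ^ 2) := by
  simp only [sq, mul_sub, sub_mul, mul_one, one_mul, ← mul_assoc, hp.eq, hq.eq,
    hp.mul_mul_self, hq.mul_mul_self]
  abel

theorem IsIdempotentElem.commute_ringInverse_one_sub_sub_sq (hp : IsIdempotentElem p)
    (hq : IsIdempotentElem q) : Commute p (1 - (p - q) ^ 2)⁻¹ʳ :=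
  ((Commute.one_right p).sub_right (hp.commute_sub_sq hq)).ringInverse_right

theorem IsIdempotentElem.commute_ringInverse_one_sub_sub_sq' (hp : IsIdempotentElem p)
    (hq : IsIdempotentElem q) : Commute q (1 - (p - q) ^ 2)⁻¹ʳ := by
  simpa only [← neg_sq (q - p), neg_sub] using hq.commute_ringInverse_one_sub_sub_sq hp

end Idempotent

section GraphIdentities

variable {R : Type*} [Ring R] {p q b : R}

theorem mul_mul_self_mul_eq_self (hp : IsIdempotentElem p) (hq : IsIdempotentElem q)
    (hb : (1 - (p - q) ^ 2) * b = 1) : p * q * p * b = p := by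
  rw [hp.mul_mul_self_eq_mul_one_sub_sub_sq hq, mul_assoc, hb, mul_one]

theorem graph_mul_self (hp : IsIdempotentElem p) (hpb : Commute p b) :
    (1 - p) * q * p * b * p = (1 - p) * q * p * b := by
  rw [mul_assoc _ b, ← hpb.eq, ← mul_assoc, hp.mul_mul_self]

theorem add_graph (hp : IsIdempotentElem p) (hq : IsIdempotentElem q)
    (hb : (1 - (p - q) ^ 2) * b = 1) : p + (1 - p) * q * p * b = q * p * b := by
  calc p + (1 - p) * q * p * b = p * q * p * b + (1 - p) * q * p * b := by
        rw [mul_mul_self_mul_eq_self hp hq hb]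
    _ = q * p * b := by noncomm_ring

theorem mul_mul_mul_self_eq_self (hp : IsIdempotentElem p) (hq : IsIdempotentElem q)
    (hb : (1 - (p - q) ^ 2) * b = 1) (hqb : Commute q b) : q * p * b * q = q := by
  have hb' : (1 - (q - p) ^ 2) * b = 1 := by rwa [show (q - p) ^ 2 = (p - q) ^ 2 by noncomm_ring]
  rw [mul_assoc _ b, ← hqb.eq, ← mul_assoc, mul_mul_self_mul_eq_self hq hp hb']

variable [StarRing R]

theorem star_graph_mul_graph (hp : IsStarProjection p) (hq : IsStarProjection q)
    (hb : (1 - (p - q) ^ 2) * b = 1) (hpb : Commute p b) (hqb : Commute q b)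
    (hb' : IsSelfAdjoint b) :
    star ((1 - p) * q * p * b) * ((1 - p) * q * p * b) = p * (b - 1) := by
  have hcomm : Commute (p * q * (1 - p) * q * p) b :=
    (((hpb.mul_left hqb).mul_left ((Commute.one_left b).sub_left hpb)).mul_left hqb).mul_left hpb
  calc star ((1 - p) * q * p * b) * ((1 - p) * q * p * b)
      = b * (p * q * (1 - p) * q * p) * b := by
        simp only [star_mul, star_sub, star_one, hp.isSelfAdjoint.star_eq,
          hq.isSelfAdjoint.star_eq, hb'.star_eq, mul_assoc,
          hp.isIdempotentElem.one_sub.mul_self_mul]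
    _ = p * (p - q) ^ 2 * ((1 - (p - q) ^ 2) * b) * b := by
        rw [← hcomm.eq, hp.isIdempotentElem.mul_mul_one_sub_mul_mul_self hq.isIdempotentElem]
        simp only [mul_assoc]
    _ = p * (b - 1) := by rw [hb, mul_one, mul_assoc, mul_eq_sub_one_of_one_sub_mul_eq_one hb]

theorem graph_mul_star_graph (hp : IsStarProjection p) (hq : IsStarProjection q)
    (hb : (1 - (p - q) ^ 2) * b = 1) (hpb : Commute p b) (hqb : Commute q b)
    (hb' : IsSelfAdjoint b) :
    ((1 - p) * q * p * b) * star ((1 - p) * q * p * b) = (1 - p) * (b - 1) := by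
  have hcomm : Commute (p * q * (1 - p)) b :=
    (hpb.mul_left hqb).mul_left ((Commute.one_left b).sub_left hpb)
  calc ((1 - p) * q * p * b) * star ((1 - p) * q * p * b)
      = (1 - p) * q * p * ((b * b) * (p * q * (1 - p))) := by
        simp only [star_mul, star_sub, star_one, hp.isSelfAdjoint.star_eq,
          hq.isSelfAdjoint.star_eq, hb'.star_eq, mul_assoc]
    _ = (1 - p) * q * p * q * (1 - p) * (b * b) := by
        rw [← (hcomm.mul_right hcomm).eq]
        simp only [← mul_assoc, hp.isIdempotentElem.mul_mul_self]
    _ = (1 - p) * (p - q) ^ 2 * ((1 - (p - q) ^ 2) * b) * b := by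
        rw [hp.isIdempotentElem.one_sub_mul_mul_mul_mul_one_sub hq.isIdempotentElem]
        simp only [mul_assoc]
    _ = (1 - p) * (b - 1) := by rw [hb, mul_one, mul_assoc, mul_eq_sub_one_of_one_sub_mul_eq_one hb]

end GraphIdentities

theorem spectrum.mem_or_mem_of_commute {R A : Type*} [CommSemiring R] [Ring A] [Algebra R A]
    {a e : A} (he : IsIdempotentElem e) (hea : Commute e a) {r : R} (hr : r ∈ spectrum R a) :
    r ∈ spectrum R (e * a) ∨ r ∈ spectrum R ((1 - e) * a) := by
  have hzero : e * a * ((1 - e) * a) = 0 := by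
    rw [mul_assoc, ← mul_assoc a, ← ((Commute.one_left a).sub_left hea).eq, ← mul_assoc,
      ← mul_assoc, he.mul_one_sub_self, zero_mul, zero_mul]
  have hfactor : (algebraMap R A r - e * a) * (algebraMap R A r - (1 - e) * a) =
      algebraMap R A r * (algebraMap R A r - a) := by
    rw [sub_mul, mul_sub, mul_sub, hzero, sub_zero, ← Algebra.commutes r (e * a)]
    noncomm_ring
  by_contra! h
  simp only [spectrum.mem_iff, not_not] at h hr
  have hunit := h.1.mul h.2
  rw [hfactor] at hunit
  exact hr ((Algebra.commute_algebraMap_left r _).isUnit_mul_iff.mp hunit).2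

theorem spectrum.inv_one_sub_sub_one_mem {𝕜 A : Type*} [Field 𝕜] [Ring A] [Algebra 𝕜 A]
    {a : A} (ha : IsUnit (1 - a)) {r : 𝕜} (hr : r ∈ spectrum 𝕜 a) :
    (1 - r)⁻¹ - 1 ∈ spectrum 𝕜 ((1 - a)⁻¹ʳ - 1) := by
  obtain ⟨u, hu⟩ := ha
  have h1 : 1 - r ∈ spectrum 𝕜 (u : A) := by
    rw [hu, ← map_one (algebraMap 𝕜 A), ← spectrum.singleton_sub_eq]
    exact Set.sub_mem_sub rfl hr
  have h2 : (1 - r)⁻¹ ∈ spectrum 𝕜 (↑u⁻¹ : A) := by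
    rw [← spectrum.map_inv]
    exact Set.inv_mem_inv.mpr h1
  rw [← hu, Ring.inverse_unit, ← map_one (algebraMap 𝕜 A), ← spectrum.sub_singleton_eq]
  exact Set.sub_mem_sub h2 rfl

section NormedRing

variable {A : Type*} [NormedRing A] [HasSummableGeomSeries A]

theorem isUnit_one_sub_sq_of_norm_lt_one {a : A} (h : ‖a‖ < 1) : IsUnit (1 - a ^ 2) :=
  isUnit_one_sub_of_norm_lt_one <|
    (norm_pow_le' a two_pos).trans_lt (pow_lt_one₀ (norm_nonneg a) h two_ne_zero)

theorem norm_ringInverse_one_sub_sub_one_le [NormOneClass A] {a : A} (h : ‖a‖ < 1) :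
    ‖(1 - a)⁻¹ʳ - 1‖ ≤ (1 - ‖a‖)⁻¹ - 1 := by
  have hb : ‖(1 - a)⁻¹ʳ‖ ≤ (1 - ‖a‖)⁻¹ := by
    simpa [← geom_series_eq_inverse a h] using tsum_geometric_le_of_norm_lt_one a h
  calc ‖(1 - a)⁻¹ʳ - 1‖ ≤ ‖a‖ * (1 - ‖a‖)⁻¹ := by
        rw [← mul_eq_sub_one_of_one_sub_mul_eq_one
          (Ring.mul_inverse_cancel _ (isUnit_one_sub_of_norm_lt_one h))]
        exact (norm_mul_le _ _).trans (by gcongr)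
    _ = (1 - ‖a‖)⁻¹ - 1 := by
        field_simp [(sub_pos.mpr h).ne']
        ring

end NormedRing

section CStarAlgebra

variable {A : Type*} [CStarAlgebra A] [PartialOrder A] [StarOrderedRing A]

theorem IsStarProjection.norm_graph_sq {p q : A} (hp : IsStarProjection p)
    (hq : IsStarProjection q) (h : ‖p - q‖ < 1) :
    ‖(1 - p) * q * p * (1 - (p - q) ^ 2)⁻¹ʳ‖ ^ 2 = (1 - ‖p - q‖ ^ 2)⁻¹ - 1 := by
  nontriviality A
  have hd : IsSelfAdjoint (p - q) := hp.isSelfAdjoint.sub hq.isSelfAdjoint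
  have hs : ‖(p - q) ^ 2‖ = ‖p - q‖ ^ 2 := by rw [sq, hd.norm_mul_self, sq]
  have hs1 : ‖(p - q) ^ 2‖ < 1 := hs ▸ pow_lt_one₀ (norm_nonneg _) h two_ne_zero
  have hu : IsUnit (1 - (p - q) ^ 2) := isUnit_one_sub_sq_of_norm_lt_one h
  set b := (1 - (p - q) ^ 2)⁻¹ʳ
  have hb : (1 - (p - q) ^ 2) * b = 1 := Ring.mul_inverse_cancel _ hu
  have hpb : Commute p b :=
    hp.isIdempotentElem.commute_ringInverse_one_sub_sub_sq hq.isIdempotentElem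
  have hqb : Commute q b :=
    hp.isIdempotentElem.commute_ringInverse_one_sub_sub_sq' hq.isIdempotentElem
  have hbsa : IsSelfAdjoint b := ((IsSelfAdjoint.one A).sub (hd.pow 2)).ringInverse
  have hpy : ‖(1 - p) * q * p * b‖ ^ 2 = ‖p * (b - 1)‖ := by
    rw [← star_graph_mul_graph hp hq hb hpb hqb hbsa, CStarRing.norm_star_mul_self, sq]
  have hpy' : ‖(1 - p) * q * p * b‖ ^ 2 = ‖(1 - p) * (b - 1)‖ := by
    rw [← graph_mul_star_graph hp hq hb hpb hqb hbsa, CStarRing.norm_self_mul_star, sq]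
  rw [← hs]
  apply le_antisymm
  · calc ‖(1 - p) * q * p * b‖ ^ 2 ≤ ‖p‖ * ‖b - 1‖ := hpy ▸ norm_mul_le _ _
      _ ≤ 1 * ((1 - ‖(p - q) ^ 2‖)⁻¹ - 1) := by
        gcongr
        · exact hp.norm_le
        · exact norm_ringInverse_one_sub_sub_one_le hs1
      _ = _ := one_mul _
  · have hmem := spectrum.inv_one_sub_sub_one_mem hu
      (CStarAlgebra.norm_mem_spectrum_of_nonneg hd.sq_nonneg)
    rcases spectrum.mem_or_mem_of_commute hp.isIdempotentElem
      (hpb.sub_right (Commute.one_right p)) hmem with hcorner | hcorner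
    · exact hpy ▸ (Real.le_norm_self _).trans (spectrum.norm_le_norm_of_mem hcorner)
    · exact hpy' ▸ (Real.le_norm_self _).trans (spectrum.norm_le_norm_of_mem hcorner)

end CStarAlgebra

theorem eq_div_sqrt_one_add_sq_of_sq_eq {r m : ℝ} (hr : 0 ≤ r) (hr1 : r < 1) (hm : 0 ≤ m)
    (h : m ^ 2 = (1 - r ^ 2)⁻¹ - 1) : r = m / √(1 + m ^ 2) := by
  have hr2 : 0 < 1 - r ^ 2 := by nlinarith
  rw [eq_div_iff (by positivity)]
  refine (sq_eq_sq₀ (by positivity) hm).mp ?_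
  rw [mul_pow, Real.sq_sqrt (by positivity), h]
  field_simp
  ring

namespace ContinuousLinearMap

theorem range_eq_graph {R M : Type*} [Semiring R] [TopologicalSpace M] [AddCommMonoid M]
    [ContinuousAdd M] [Module R M] {P Q Y T : M →L[R] M} (hY : Y * P = Y) (hPY : P + Y = Q * T)
    (hQ : Q * T * Q = Q) :
    (LinearMap.range (Q : M →ₗ[R] M) : Set M) =
      {x | ∃ f : LinearMap.range (P : M →ₗ[R] M), x = f + Y f} := by
  ext x
  constructor
  · rintro ⟨w, rfl⟩
    refine ⟨⟨P (Q w), LinearMap.mem_range_self _ _⟩, ?_⟩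
    calc Q w = (Q * T * Q) w := by rw [hQ]
      _ = (P + Y) (Q w) := by rw [hPY]; rfl
      _ = P (Q w) + Y (P (Q w)) := congrArg (P (Q w) + ·) (DFunLike.congr_fun hY (Q w)).symm
  · rintro ⟨⟨_, w, rfl⟩, rfl⟩
    refine ⟨T w, ?_⟩
    calc Q (T w) = (P + Y) w := by rw [hPY]; rfl
      _ = P w + Y (P w) := congrArg (P w + ·) (DFunLike.congr_fun hY w).symm

variable {𝕜 E F : Type*} [NontriviallyNormedField 𝕜] [SeminormedAddCommGroup E]
  [NormedSpace 𝕜 E] [SeminormedAddCommGroup F] [NormedSpace 𝕜 F]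

theorem norm_codRestrict (f : E →L[𝕜] F) (p : Submodule 𝕜 F) (h : ∀ x, f x ∈ p) :
    ‖f.codRestrict p h‖ = ‖f‖ :=
  LinearIsometry.norm_toContinuousLinearMap_comp p.subtypeₗᵢ (g := f.codRestrict p h)

theorem norm_comp_subtypeL_range {P Y : E →L[𝕜] E} (hP : ‖P‖ ≤ 1) (hY : Y * P = Y) :
    ‖Y.comp (LinearMap.range (P : E →ₗ[𝕜] E)).subtypeL‖ = ‖Y‖ := by
  refine le_antisymm ((opNorm_comp_le _ _).trans (mul_le_of_le_one_right (norm_nonneg Y)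
    (Submodule.norm_subtypeL_le _))) (opNorm_le_bound _ (norm_nonneg _) fun x => ?_)
  calc ‖Y x‖ = ‖Y.comp (LinearMap.range (P : E →ₗ[𝕜] E)).subtypeL ⟨P x, x, rfl⟩‖ := by
        conv_lhs => rw [← hY]
        rfl
    _ ≤ _ * ‖P x‖ := le_opNorm _ _
    _ ≤ _ * ‖x‖ := by gcongr; exact le_of_opNorm_le P hP x |>.trans_eq (one_mul _)

end ContinuousLinearMap

/-- **Graph representation of a pair of projections.** If `P` and `Q` are orthogonal
projections on a Hilbert space `H` with `‖P − Q‖ < 1`, then `Ran Q` is the graph of a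
bounded operator `X : Ran P → Ran P^⊥`, i.e. `Ran Q = { f + X f : f ∈ Ran P }`, and
`‖P − Q‖ = ‖X‖ / √(1 + ‖X‖²)`. -/
theorem range_eq_graph_of_norm_diff_projections_lt_one
    {H : Type*} [NormedAddCommGroup H] [InnerProductSpace ℂ H] [CompleteSpace H]
    (P Q : H →L[ℂ] H)
    (hP : IsSelfAdjoint P) (hP2 : P * P = P)
    (hQ : IsSelfAdjoint Q) (hQ2 : Q * Q = Q)
    (h : ‖P - Q‖ < 1) :
    ∃ X : ↥(LinearMap.range (P : H →ₗ[ℂ] H)) →L[ℂ] ↥(LinearMap.range ((1 - P : H →L[ℂ] H) : H →ₗ[ℂ] H)),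
      (LinearMap.range (Q : H →ₗ[ℂ] H) : Set H) =
        {x : H | ∃ f : ↥(LinearMap.range (P : H →ₗ[ℂ] H)), x = (f : H) + (X f : H)} ∧
      ‖P - Q‖ = ‖X‖ / Real.sqrt (1 + ‖X‖ ^ 2) := by
  have hPi : IsIdempotentElem P := hP2
  have hQi : IsIdempotentElem Q := hQ2
  have hPp : IsStarProjection P := ⟨hPi, hP⟩
  set b := (1 - (P - Q) ^ 2)⁻¹ʳ
  have hb : (1 - (P - Q) ^ 2) * b = 1 :=
    Ring.mul_inverse_cancel _ (isUnit_one_sub_sq_of_norm_lt_one h)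
  set Y := (1 - P) * Q * P * b
  have hYP : Y * P = Y := graph_mul_self hPi (hPi.commute_ringInverse_one_sub_sub_sq hQi)
  have hPY : P + Y = Q * (P * b) := (add_graph hPi hQi hb).trans (mul_assoc _ _ _)
  have hQ' : Q * (P * b) * Q = Q := by
    rw [← mul_assoc,
      mul_mul_mul_self_eq_self hPi hQi hb (hPi.commute_ringInverse_one_sub_sub_sq' hQi)]
  let X := (Y.comp (LinearMap.range (P : H →ₗ[ℂ] H)).subtypeL).codRestrict
    (LinearMap.range ((1 - P : H →L[ℂ] H) : H →ₗ[ℂ] H)) fun f => ⟨Q (P (b f)), rfl⟩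
  have hX : ‖X‖ = ‖Y‖ := (ContinuousLinearMap.norm_codRestrict _ _ _).trans
    (ContinuousLinearMap.norm_comp_subtypeL_range hPp.norm_le hYP)
  refine ⟨X, ContinuousLinearMap.range_eq_graph hYP hPY hQ', ?_⟩
  rw [hX]
  exact eq_div_sqrt_one_add_sq_of_sq_eq (norm_nonneg _) h (norm_nonneg _)
    (hPp.norm_graph_sq ⟨hQi, hQ⟩ h)
end
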